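/- arXiv:1404.0666 — 5 statements merged into one kernel-verified Lean document; each statement's English description precedes it below -/
import Mathlib

section
/- The augmented complex 0 → P_2 →^{d_2} P_1 →^{d_1} P_0 →^{ε} ℤ → 0 is exact; that is, ε is surjective, ker ε = im d_1, ker d_1 = im d_2, and d_2 is injective. Hence P is a free resolution of the trivial ℤG-module ℤ over ℤG. -/
/-!
The Fox derivative `D : F → (ℤG)^{2n}` on the free group `F` over the generators is the crossed
homomorphism with `D(vw) = D(v) + v D(w)` and `D(s) = eₛ`, and `d₂ r = r D(p)`. The fundamental
formula `∑ₛ Dₛ(w) (s - 1) = w - 1` gives `d₁ ∘ d₂ = 0`, and shows that the image of `d₁` contains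
every `g - 1`, hence the whole augmentation ideal.

For exactness at `P₁` (Lyndon), lift a cycle `v` of `d₁` to `ṽ` over `ℤF`. Then
`x = ∑ₛ ṽₛ (s - 1)` lies in the kernel of `ℤF → ℤG`, and the `ℤ`-linear extension
`ℤF → (ℤG)^{2n}` of `D` sends `x` to `v`. This extension maps that kernel, which is spanned by the
`w - w'` with `w ≡ w'` modulo the normal closure `N` of `p`, into `ℤG ⋅ D(p)`, because `D` is
additive and `G`-equivariant on `N`.

`d₂` is injective because its first coordinate is right multiplication by `1 - a₁b₁a₁⁻¹`, and
`r = r g` is impossible for `r ≠ 0` when `g` has infinite order: the finite support of `r` would be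
stable under right translation by `g`. Counting exponents of the `bᵢ` gives a homomorphism
`G → ℤ` sending `a₁b₁a₁⁻¹` to `1`, so this element has infinite order.
-/

open scoped TensorProduct
open scoped commutatorElement

namespace SurfaceOr

/-- Generators: `Sum.inl i` is `aᵢ`, `Sum.inr i` is `bᵢ`. -/
abbrev Gen (n : ℕ) := Fin n ⊕ Fin n

/-- The single relator `[a₁,b₁][a₂,b₂]⋯[aₙ,bₙ]` of the orientable surface group. -/
def rel (n : ℕ) : FreeGroup (Gen n) :=
  (List.ofFn fun i : Fin n =>
    ⁅(FreeGroup.of (Sum.inl i) : FreeGroup (Gen n)), FreeGroup.of (Sum.inr i)⁆).prod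

/-- The orientable surface group of genus `n`. -/
abbrev SurfaceGroup (n : ℕ) := PresentedGroup ({rel n} : Set (FreeGroup (Gen n)))

noncomputable def a {n : ℕ} (i : Fin n) : SurfaceGroup n := PresentedGroup.of (Sum.inl i)
noncomputable def b {n : ℕ} (i : Fin n) : SurfaceGroup n := PresentedGroup.of (Sum.inr i)

/-- `q k = p₁ p₂ ⋯ p_k` where `pᵢ = [aᵢ,bᵢ]`. -/
noncomputable def q {n : ℕ} (k : ℕ) : SurfaceGroup n :=
  ((List.ofFn fun i : Fin n => ⁅a i, b i⁆).take k).prod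

/-- The integral group ring `ℤG`. -/
abbrev A (n : ℕ) := MonoidAlgebra ℤ (SurfaceGroup n)

/-- Inclusion of the group in its group ring. -/
noncomputable def j {n : ℕ} : SurfaceGroup n →* A n := MonoidAlgebra.of ℤ (SurfaceGroup n)

/-- The Fox derivative `∂p/∂aᵢ = q_{i-1}(1 - aᵢbᵢaᵢ⁻¹)`. -/
noncomputable def Fa {n : ℕ} (i : Fin n) : A n :=
  j (q i.val) * (1 - j (a i * b i * (a i)⁻¹))

/-- The Fox derivative `∂p/∂bᵢ = q_{i-1}aᵢ(1 - bᵢaᵢ⁻¹bᵢ⁻¹)`. -/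
noncomputable def Fb {n : ℕ} (i : Fin n) : A n :=
  j (q i.val * a i) * (1 - j (b i * (a i)⁻¹ * (b i)⁻¹))

abbrev P0 (n : ℕ) := A n
abbrev P1 (n : ℕ) := Gen n → A n
abbrev P2 (n : ℕ) := A n

/-- Coefficients of `d₁`. -/
noncomputable def c {n : ℕ} : Gen n → A n
  | .inl i => j (a i) - 1
  | .inr i => j (b i) - 1

/-- Coefficients of `d₂` (the Fox derivatives of the relator). -/
noncomputable def fox {n : ℕ} : Gen n → A n
  | .inl i => Fa i
  | .inr i => Fb i

/-- `d₁ : P₁ → P₀`, `yᵢ ↦ (aᵢ-1)x`, `zᵢ ↦ (bᵢ-1)x`. -/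
noncomputable def d1 {n : ℕ} : P1 n →ₗ[A n] P0 n where
  toFun f := ∑ s, f s * c s
  map_add' f g := by simp [add_mul, Finset.sum_add_distrib]
  map_smul' r f := by simp [Finset.mul_sum, mul_assoc, smul_eq_mul, mul_add]

/-- `d₂ : P₂ → P₁`, `w ↦ Σᵢ (∂p/∂aᵢ)yᵢ + (∂p/∂bᵢ)zᵢ`. -/
noncomputable def d2 {n : ℕ} : P2 n →ₗ[A n] P1 n where
  toFun r := fun s => r * fox s
  map_add' r r' := by funext s; simp [add_mul]
  map_smul' r r' := by funext s; simp [mul_assoc, smul_eq_mul]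

/-- The augmentation `ε : ℤG → ℤ`. -/
noncomputable def aug {n : ℕ} : A n →ₐ[ℤ] ℤ := MonoidAlgebra.lift ℤ ℤ (SurfaceGroup n) 1

end SurfaceOr

namespace FreeGroup

variable {α k H : Type*} [CommRing k] [Group H] (u : FreeGroup α →* H)

noncomputable def boundary [Fintype α] :
    (α → MonoidAlgebra k H) →ₗ[MonoidAlgebra k H] MonoidAlgebra k H :=
  Fintype.linearCombination (MonoidAlgebra k H) fun s => MonoidAlgebra.of k H (u (of s)) - 1

theorem boundary_apply [Fintype α] (f : α → MonoidAlgebra k H) :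
    boundary u f = ∑ s, f s * (MonoidAlgebra.of k H (u (of s)) - 1) := rfl

theorem mapDomainRingHom_boundary_id [Fintype α] (y : α → MonoidAlgebra k (FreeGroup α)) :
    MonoidAlgebra.mapDomainRingHom k u (boundary (MonoidHom.id _) y) =
      boundary u fun s => MonoidAlgebra.mapDomainRingHom k u (y s) := by
  simp only [boundary_apply, map_sum, _root_.map_mul, map_sub, _root_.map_one, MonoidHom.id_apply]
  simp [MonoidAlgebra.of_apply, MonoidAlgebra.mapDomain_single]

/-- In the semidirect product by this action (left multiplication), the first component of a
product obeys the Leibniz rule `D (v * w) = D v + v • D w` of Fox derivatives. -/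
noncomputable def foxAction : H →* MulAut (Multiplicative (α → MonoidAlgebra k H)) :=
  (MulAutMultiplicative _).symm.toMonoidHom.comp <|
    (DistribMulAction.toAddAut (MonoidAlgebra k H)ˣ (α → MonoidAlgebra k H)).comp <|
      (Units.map (MonoidAlgebra.of k H)).comp toUnits.toMonoidHom

variable [DecidableEq α]

noncomputable def foxLift :
    FreeGroup α →* Multiplicative (α → MonoidAlgebra k H) ⋊[foxAction] H :=
  FreeGroup.lift fun s => ⟨.ofAdd (Pi.single s 1), u (of s)⟩

noncomputable def foxDeriv (w : FreeGroup α) : α → MonoidAlgebra k H :=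
  (foxLift u w).left.toAdd

theorem foxLift_right (w : FreeGroup α) : (foxLift (k := k) u w).right = u w :=
  DFunLike.congr_fun (FreeGroup.ext_hom (f := SemidirectProduct.rightHom.comp (foxLift u)) (g := u)
    fun _ => by simp [foxLift]) w

@[simp] theorem foxDeriv_of (s : α) : foxDeriv (k := k) u (of s) = Pi.single s 1 := by
  simp [foxDeriv, foxLift]

@[simp] theorem foxDeriv_one : foxDeriv (k := k) u 1 = 0 := by
  simp [foxDeriv]

theorem foxDeriv_mul (v w : FreeGroup α) :
    foxDeriv (k := k) u (v * w) = foxDeriv u v + MonoidAlgebra.of k H (u v) • foxDeriv u w := by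
  rw [foxDeriv, _root_.map_mul, SemidirectProduct.mul_left, foxLift_right]
  rfl

theorem foxDeriv_inv (w : FreeGroup α) :
    foxDeriv (k := k) u w⁻¹ = -(MonoidAlgebra.of k H (u w⁻¹) • foxDeriv u w) := by
  rw [eq_neg_iff_add_eq_zero, ← foxDeriv_mul, inv_mul_cancel, foxDeriv_one]

theorem foxDeriv_conj_of_eq_one {w : FreeGroup α} (hw : u w = 1) (v : FreeGroup α) :
    foxDeriv (k := k) u (v * w * v⁻¹) = MonoidAlgebra.of k H (u v) • foxDeriv u w := by
  have h : u (v * w) * u v⁻¹ = 1 := by simp [hw]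
  rw [foxDeriv_mul, foxDeriv_mul, foxDeriv_inv, smul_neg, smul_smul, ← _root_.map_mul, h,
    _root_.map_one, one_smul, add_neg_cancel_comm]

theorem foxDeriv_commutatorElement (v w : FreeGroup α) :
    foxDeriv (k := k) u ⁅v, w⁆ =
      (1 - MonoidAlgebra.of k H (u (v * w * v⁻¹))) • foxDeriv u v
        + (MonoidAlgebra.of k H (u v) - MonoidAlgebra.of k H (u ⁅v, w⁆)) • foxDeriv u w := by
  simp only [commutatorElement_def, foxDeriv_mul, foxDeriv_inv, _root_.map_mul, _root_.map_inv,
    sub_smul, one_smul, smul_neg, smul_smul]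
  abel

theorem foxDeriv_prod_ofFn {m : ℕ} (f : Fin m → FreeGroup α) :
    foxDeriv (k := k) u (List.ofFn f).prod =
      ∑ i : Fin m, MonoidAlgebra.of k H (u ((List.ofFn f).take i).prod) • foxDeriv u (f i) := by
  induction m with
  | zero => simp
  | succ m ih =>
    simp [List.ofFn_succ, foxDeriv_mul, ih, Finset.smul_sum, Fin.sum_univ_succ, smul_smul,
      ← _root_.map_mul, ← MonoidAlgebra.one_def]

theorem boundary_foxDeriv [Fintype α] (w : FreeGroup α) :
    boundary u (foxDeriv u w) = MonoidAlgebra.of k H (u w) - 1 := by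
  rw [boundary_apply]
  induction w using FreeGroup.induction_on with
  | C1 => simp only [foxDeriv_one, Pi.zero_apply, zero_mul, Finset.sum_const_zero,
      _root_.map_one, sub_self]
  | of s => simp [Pi.single_apply]
  | inv_of s ih =>
    simp only [foxDeriv_inv, Pi.neg_apply, Pi.smul_apply, smul_eq_mul, neg_mul, mul_assoc,
      Finset.sum_neg_distrib, ← Finset.mul_sum, ih]
    rw [mul_sub, ← _root_.map_mul, ← _root_.map_mul u, inv_mul_cancel, _root_.map_one,
      _root_.map_one, mul_one, neg_sub]
  | mul v w ihv ihw =>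
    simp only [foxDeriv_mul, Pi.add_apply, Pi.smul_apply, smul_eq_mul, add_mul, mul_assoc,
      Finset.sum_add_distrib, ← Finset.mul_sum, ihv, ihw, _root_.map_mul]
    noncomm_ring

theorem foxDeriv_mem_of_mem_normalClosure {R : Set (FreeGroup α)} (hR : ∀ r ∈ R, u r = 1)
    {M : Submodule (MonoidAlgebra k H) (α → MonoidAlgebra k H)} (hM : ∀ r ∈ R, foxDeriv u r ∈ M)
    {w : FreeGroup α} (hw : w ∈ Subgroup.normalClosure R) : foxDeriv u w ∈ M := by
  suffices u w = 1 ∧ foxDeriv u w ∈ M from this.2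
  induction hw using Subgroup.closure_induction with
  | mem x hx =>
    obtain ⟨r, hr, hconj⟩ := Group.mem_conjugatesOfSet_iff.1 hx
    obtain ⟨c, rfl⟩ := isConj_iff.1 hconj
    refine ⟨by simp [hR r hr], ?_⟩
    rw [foxDeriv_conj_of_eq_one u (hR r hr)]
    exact M.smul_mem _ (hM r hr)
  | one => simp
  | mul v w _ _ hv hw =>
    refine ⟨by simp [hv.1, hw.1], ?_⟩
    rw [foxDeriv_mul]
    exact M.add_mem hv.2 (M.smul_mem _ hw.2)
  | inv w _ hw =>
    refine ⟨by simp [hw.1], ?_⟩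
    rw [foxDeriv_inv]
    exact M.neg_mem (M.smul_mem _ hw.2)

theorem foxDeriv_sub_mem_of_eq {M : Submodule (MonoidAlgebra k H) (α → MonoidAlgebra k H)}
    (hM : ∀ w, u w = 1 → foxDeriv u w ∈ M) {v w : FreeGroup α} (h : u v = u w) :
    foxDeriv u v - foxDeriv u w ∈ M := by
  rw [← mul_inv_cancel_left w v, foxDeriv_mul, add_sub_cancel_left]
  exact M.smul_mem _ (hM _ (by simp [h]))

noncomputable def foxDerivLinear : MonoidAlgebra k (FreeGroup α) →ₗ[k] (α → MonoidAlgebra k H) :=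
  Finsupp.linearCombination k (foxDeriv u) ∘ₗ (MonoidAlgebra.coeffLinearEquiv k).toLinearMap

@[simp] theorem foxDerivLinear_single (w : FreeGroup α) (c : k) :
    foxDerivLinear u (MonoidAlgebra.single w c) = c • foxDeriv u w := by
  simp [foxDerivLinear]

theorem foxDerivLinear_mul_of_sub_one (x : MonoidAlgebra k (FreeGroup α)) (s : α) :
    foxDerivLinear u (x * (MonoidAlgebra.of k _ (of s) - 1)) =
      Pi.single s (MonoidAlgebra.mapDomainRingHom k u x) := by
  induction x using MonoidAlgebra.induction_linear with
  | zero => simp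
  | add x y hx hy => rw [add_mul, map_add, hx, hy, _root_.map_add, Pi.single_add]
  | single w c =>
    rw [mul_sub, mul_one, MonoidAlgebra.of_apply, MonoidAlgebra.single_mul_single, mul_one,
      map_sub, foxDerivLinear_single, foxDerivLinear_single, foxDeriv_mul, smul_add,
      add_sub_cancel_left, foxDeriv_of]
    ext t
    simp [Pi.single_apply]

variable [Fintype α]

theorem foxDerivLinear_boundary_id (y : α → MonoidAlgebra k (FreeGroup α)) :
    foxDerivLinear u (boundary (MonoidHom.id _) y) =
      fun s => MonoidAlgebra.mapDomainRingHom k u (y s) := by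
  rw [boundary_apply, map_sum]
  simp only [MonoidHom.id_apply, foxDerivLinear_mul_of_sub_one]
  exact Finset.univ_sum_single _

theorem mem_of_boundary_eq_zero (hu : Function.Surjective u)
    {M : Submodule (MonoidAlgebra k H) (α → MonoidAlgebra k H)}
    (hM : ∀ w, u w = 1 → foxDeriv u w ∈ M) {f : α → MonoidAlgebra k H} (hf : boundary u f = 0) :
    f ∈ M := by
  obtain ⟨σ, hσ⟩ := hu.hasRightInverse
  let σ' := MonoidAlgebra.mapDomainLinearMap k k σ
  have hσ' (x : MonoidAlgebra k H) : MonoidAlgebra.mapDomainRingHom k u (σ' x) = x := by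
    apply MonoidAlgebra.coeff_injective
    simp [σ', MonoidAlgebra.mapDomain, ← Finsupp.mapDomain_comp, hσ.comp_eq_id]
  -- `x - σ'(u x)` runs through the kernel of `k[F] → k[H]` as `x` runs through `k[F]`.
  have hker (x : MonoidAlgebra k (FreeGroup α)) :
      foxDerivLinear u (x - σ' (MonoidAlgebra.mapDomainRingHom k u x)) ∈ M := by
    induction x using MonoidAlgebra.induction_linear with
    | zero => simp
    | add x y hx hy =>
      simpa [add_sub_add_comm, MonoidAlgebra.mapDomain_add] using M.add_mem hx hy
    | single w c =>
      simpa [σ', smul_sub, MonoidAlgebra.mapDomain_single] using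
        M.smul_of_tower_mem c (foxDeriv_sub_mem_of_eq u hM (hσ (u w)).symm)
  have hcycle : MonoidAlgebra.mapDomainRingHom k u (boundary (MonoidHom.id _) (σ' ∘ f)) = 0 := by
    rw [mapDomainRingHom_boundary_id]
    simpa only [Function.comp_apply, hσ'] using hf
  simpa only [hcycle, map_zero, sub_zero, foxDerivLinear_boundary_id, Function.comp_apply, hσ']
    using hker (boundary (MonoidHom.id _) (σ' ∘ f))

theorem mem_range_boundary_iff (hu : Function.Surjective u) (x : MonoidAlgebra k H) :
    x ∈ LinearMap.range (boundary u) ↔ MonoidAlgebra.lift k k H 1 x = 0 := by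
  have key : x - algebraMap k _ (MonoidAlgebra.lift k k H 1 x) ∈ LinearMap.range (boundary u) := by
    induction x using MonoidAlgebra.induction_linear with
    | zero => simp
    | add x y hx hy => simpa [add_sub_add_comm] using Submodule.add_mem _ hx hy
    | single g c =>
      obtain ⟨w, rfl⟩ := hu g
      refine ⟨c • foxDeriv u w, ?_⟩
      rw [LinearMap.map_smul_of_tower, boundary_foxDeriv, MonoidAlgebra.lift_single]
      simp [smul_sub, MonoidAlgebra.smul_single, Algebra.algebraMap_eq_smul_one]
  constructor
  · rintro ⟨f, rfl⟩
    simp [boundary_apply, map_sum]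
  · intro hx
    simpa [hx] using key

theorem ker_boundary_mk (R : Set (FreeGroup α)) :
    LinearMap.ker (boundary (k := k) (PresentedGroup.mk R)) =
      Submodule.span _ (foxDeriv (PresentedGroup.mk R) '' R) := by
  apply le_antisymm
  · intro f hf
    refine mem_of_boundary_eq_zero _ (PresentedGroup.mk_surjective R) (fun w hw => ?_) hf
    exact foxDeriv_mem_of_mem_normalClosure _ (fun r => PresentedGroup.one_of_mem)
      (fun r hr => Submodule.subset_span (Set.mem_image_of_mem _ hr))
      (PresentedGroup.mk_eq_one_iff.1 hw)
  · rw [Submodule.span_le]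
    rintro _ ⟨r, hr, rfl⟩
    rw [SetLike.mem_coe, LinearMap.mem_ker, boundary_foxDeriv, PresentedGroup.one_of_mem hr,
      _root_.map_one, sub_self]

end FreeGroup

theorem MonoidAlgebra.isRightRegular_one_sub_of {k G : Type*} [Ring k] [Group G] {g : G}
    (hg : ¬IsOfFinOrder g) : IsRightRegular (1 - of k G g) := by
  refine isRightRegular_iff_left_eq_zero_of_mul.2 fun x hx => ?_
  rw [mul_sub, mul_one, sub_eq_zero, eq_comm] at hx
  have hcoeff (h : G) (m : ℕ) : x.coeff (h * g ^ m) = x.coeff h := by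
    induction m with
    | zero => simp
    | succ m ih =>
      conv_lhs => rw [← hx]
      rw [of_apply, coeff_mul_single_apply, mul_one, pow_succ, ← mul_assoc, mul_inv_cancel_right,
        ih]
  by_contra hx0
  obtain ⟨h, hh⟩ := Finsupp.support_nonempty_iff.2 (mt coeff_eq_zero.1 hx0)
  have hinj : Function.Injective fun m : ℕ => h * g ^ m :=
    (mul_right_injective h).comp (injective_pow_iff_not_isOfFinOrder.2 hg)
  refine Set.infinite_range_of_injective hinj (x.coeff.support.finite_toSet.subset ?_)
  rintro _ ⟨m, rfl⟩
  simpa [hcoeff] using hh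

namespace SurfaceOr

variable {n : ℕ}

theorem d1_eq_boundary : d1 (n := n) = FreeGroup.boundary (PresentedGroup.mk _) := by
  refine LinearMap.ext fun f => (Finset.sum_congr rfl fun s _ => ?_ :
    ∑ s, f s * c s = ∑ s, f s * (j (PresentedGroup.mk _ (FreeGroup.of s)) - 1))
  cases s <;> rfl

theorem range_d2 : LinearMap.range (d2 (n := n)) = Submodule.span (A n) {fox} := by
  rw [LinearMap.span_singleton_eq_range]
  rfl

theorem mk_prod_take_eq_q (i : ℕ) :
    PresentedGroup.mk {rel n} ((List.ofFn fun i : Fin n =>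
      ⁅(FreeGroup.of (Sum.inl i) : FreeGroup (Gen n)), FreeGroup.of (Sum.inr i)⁆).take i).prod =
      q i := by
  rw [map_list_prod, List.map_take, List.map_ofFn]
  rfl

theorem foxDeriv_rel : FreeGroup.foxDeriv (k := ℤ) (PresentedGroup.mk _) (rel n) = fox := by
  refine (FreeGroup.foxDeriv_prod_ofFn _ _).trans (funext fun s => ?_)
  simp only [mk_prod_take_eq_q, FreeGroup.foxDeriv_commutatorElement, FreeGroup.foxDeriv_of]
  have ha (i : Fin n) : PresentedGroup.mk {rel n} (FreeGroup.of (Sum.inl i)) = a i := rfl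
  have hb (i : Fin n) : PresentedGroup.mk {rel n} (FreeGroup.of (Sum.inr i)) = b i := rfl
  rcases s with i | i
  · simp [Pi.single_apply, fox, Fa, j, ha, hb]
  · simp [Pi.single_apply, fox, Fb, j, ha, hb, commutatorElement_def, mul_sub, mul_assoc]

theorem lift_rel_eq_one {C : Type*} [CommGroup C] (f : Gen n → C) :
    FreeGroup.lift f (rel n) = 1 := by
  rw [rel, map_list_prod, List.map_ofFn]
  exact List.prod_eq_one (by simp [List.mem_ofFn, commutatorElement_def])

noncomputable def bExponent : SurfaceGroup n →* Multiplicative ℤ :=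
  PresentedGroup.toGroup (f := Sum.elim 1 fun _ => .ofAdd 1) fun _ hr =>
    (Set.mem_singleton_iff.1 hr) ▸ lift_rel_eq_one _

theorem not_isOfFinOrder_conj_b (i : Fin n) : ¬IsOfFinOrder (a i * b i * (a i)⁻¹) := fun h => by
  have := bExponent.isOfFinOrder h
  simp [bExponent, a, b, PresentedGroup.toGroup.of] at this
  exact not_isOfFinOrder_of_isMulTorsionFree (by simp) this

theorem d2_injective (hn : 1 ≤ n) : Function.Injective (d2 (n := n)) := by
  let i : Fin n := ⟨0, hn⟩
  have hfox : fox (Sum.inl i) = 1 - j (a i * b i * (a i)⁻¹) := by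
    show j (q 0) * _ = _
    rw [show q (n := n) 0 = 1 from rfl, map_one, one_mul]
  intro x y hxy
  have : x * fox (Sum.inl i) = y * fox (Sum.inl i) := congrFun hxy (Sum.inl i)
  rw [hfox] at this
  exact MonoidAlgebra.isRightRegular_one_sub_of (not_isOfFinOrder_conj_b i) this

theorem statement0 (n : ℕ) (hn : 1 ≤ n) :
    Function.Surjective (aug (n := n)) ∧
    (∀ v : P0 n, aug v = 0 ↔ v ∈ LinearMap.range (d1 (n := n))) ∧
    LinearMap.ker (d1 (n := n)) = LinearMap.range (d2 (n := n)) ∧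
    Function.Injective (d2 (n := n)) := by
  have hsurj := PresentedGroup.mk_surjective ({rel n} : Set (FreeGroup (Gen n)))
  refine ⟨fun m => ⟨algebraMap ℤ (A n) m, aug.commutes m⟩, fun v => ?_, ?_, d2_injective hn⟩
  · rw [d1_eq_boundary, FreeGroup.mem_range_boundary_iff _ hsurj]
    rfl
  · rw [d1_eq_boundary, FreeGroup.ker_boundary_mk, Set.image_singleton, foxDeriv_rel, range_d2]

end SurfaceOr
end

section
/- There exists a diagonal approximation Δ: P → P ⊗ P whose components satisfy: Δ_0(x) = x ⊗ x; Δ_1(y_i) = y_i ⊗ a_i x + x ⊗ y_i for all 1 ≤ i ≤ n; Δ_{02}(w) = x ⊗ w; and Δ_{11}(w) = Σ_{i=1}^n [ Σ_{j=1}^{i-1} γ_j y_j ⊗ r_{i-1}(1 + a_i) y_i + r_{i-1} y_i ⊗ r_{i-1} a_i y_i ]. -/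
/-!
Each `Δ_k` is the `ℤG`-linear extension `c ↦ c · v` of its value `v` on the free generators, for
the diagonal action of `G` on `P ⊗ P`, so equivariance holds by construction. Both sides of each
chain-map identity are then equivariant, and it suffices to compare them on `x`, `yᵢ` and `w`. In
degree 2 this is Fox calculus: `d₁(γₖ yₖ) = r_k - r_{k-1}`, so the inner sums of `Δ₁₁(w)`
telescope after applying `d₁` in either tensor factor; in the second factor the telescoping runs up
to `r_n`, which is trivial in `G` because it is the relator.
-/

open scoped TensorProduct

namespace SurfaceNonOr

/-- The single relator `a₁²a₂²⋯aₙ²` of the nonorientable surface group. -/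
def rel (n : ℕ) : FreeGroup (Fin n) :=
  (List.ofFn fun i : Fin n => (FreeGroup.of i) ^ 2).prod

/-- The nonorientable surface group `⟨a₁,…,aₙ ∣ a₁²a₂²⋯aₙ²⟩`. -/
abbrev SurfaceGroup (n : ℕ) := PresentedGroup ({rel n} : Set (FreeGroup (Fin n)))

noncomputable def a {n : ℕ} (i : Fin n) : SurfaceGroup n := PresentedGroup.of i

/-- `r k = a₁²a₂²⋯a_k²`. -/
noncomputable def r {n : ℕ} (k : ℕ) : SurfaceGroup n :=
  ((List.ofFn fun i : Fin n => (a i) ^ 2).take k).prod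

/-- The integral group ring `ℤG`. -/
abbrev A (n : ℕ) := MonoidAlgebra ℤ (SurfaceGroup n)

/-- Inclusion of the group in its group ring. -/
noncomputable def j {n : ℕ} : SurfaceGroup n →* A n := MonoidAlgebra.of ℤ (SurfaceGroup n)

/-- The Fox derivative `∂p/∂aᵢ = r_{i-1}(1 + aᵢ)`. -/
noncomputable def Fa {n : ℕ} (i : Fin n) : A n := j (r i.val) * (1 + j (a i))

abbrev P0 (n : ℕ) := A n
abbrev P1 (n : ℕ) := Fin n → A n
abbrev P2 (n : ℕ) := A n

/-- `d₁ : P₁ → P₀`, `yᵢ ↦ (aᵢ-1)x`. -/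
noncomputable def d1 {n : ℕ} : P1 n →ₗ[A n] P0 n where
  toFun f := ∑ s, f s * (j (a s) - 1)
  map_add' f g := by simp [add_mul, Finset.sum_add_distrib]
  map_smul' r f := by simp [Finset.mul_sum, mul_assoc, smul_eq_mul, mul_add]

/-- `d₂ : P₂ → P₁`, `w ↦ Σᵢ (∂p/∂aᵢ)yᵢ`. -/
noncomputable def d2 {n : ℕ} : P2 n →ₗ[A n] P1 n where
  toFun c := fun s => c * Fa s
  map_add' c c' := by funext s; simp [add_mul]
  map_smul' c c' := by funext s; simp [mul_assoc, smul_eq_mul]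

/-- The augmentation `ε : ℤG → ℤ`. -/
noncomputable def aug {n : ℕ} : A n →ₐ[ℤ] ℤ := MonoidAlgebra.lift ℤ ℤ (SurfaceGroup n) 1

/-- `ε` as a `ℤ`-linear map. -/
noncomputable def augz {n : ℕ} : P0 n →ₗ[ℤ] ℤ := (aug (n := n)).toLinearMap

/-- `d₁` as a `ℤ`-linear map. -/
noncomputable def d1z {n : ℕ} : P1 n →ₗ[ℤ] P0 n := (d1 (n := n)).toAddMonoidHom.toIntLinearMap

/-- `d₂` as a `ℤ`-linear map. -/
noncomputable def d2z {n : ℕ} : P2 n →ₗ[ℤ] P1 n := (d2 (n := n)).toAddMonoidHom.toIntLinearMap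

/-- The action of `g ∈ G` on `P₀ = ℤG` (left multiplication), as a `ℤ`-linear map. -/
noncomputable def L0 {n : ℕ} (g : SurfaceGroup n) : P0 n →ₗ[ℤ] P0 n :=
  LinearMap.mulLeft ℤ (j g)

/-- The action of `g ∈ G` on `P₁ = (ℤG)ⁿ`, as a `ℤ`-linear map. -/
noncomputable def L1 {n : ℕ} (g : SurfaceGroup n) : P1 n →ₗ[ℤ] P1 n :=
  LinearMap.pi fun s => (L0 g).comp (LinearMap.proj s)

/-- `(ε ⊗ ε) : P₀ ⊗ P₀ → ℤ ⊗ ℤ ≅ ℤ`. -/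
noncomputable def augaug {n : ℕ} : P0 n ⊗[ℤ] P0 n →ₗ[ℤ] ℤ :=
  (TensorProduct.lid ℤ ℤ).toLinearMap ∘ₗ TensorProduct.map augz augz

/-- The generator `yᵢ` of `P₁`. -/
noncomputable def Y {n : ℕ} (i : Fin n) : P1 n := Pi.single i 1

/-- The element `Δ₁₁(w) ∈ P₁ ⊗ P₁` for the nonorientable surface group. -/
noncomputable def Delta11 (n : ℕ) : P1 n ⊗[ℤ] P1 n :=
  ∑ i : Fin n,
    ((∑ k ∈ Finset.Iio i, (Fa k • Y k) ⊗ₜ[ℤ] (Fa i • Y i))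
      + (j (r (n := n) i.val) • Y i) ⊗ₜ[ℤ] (j (r (n := n) i.val * a i) • Y i))

end SurfaceNonOr

open TensorProduct

section GroupRing

variable {k G V : Type*} [CommRing k] [Monoid G] [AddCommGroup V] [Module k V]

namespace Representation

variable (ρ : Representation k G V)

/-- `c ↦ c • v`: the `k[G]`-linear map `k[G] → V` sending `1` to `v`. -/
noncomputable def orbitMap (v : V) : MonoidAlgebra k G →ₗ[k] V :=
  LinearMap.applyₗ v ∘ₗ ρ.asAlgebraHom.toLinearMap

theorem orbitMap_apply (v : V) (c : MonoidAlgebra k G) : ρ.orbitMap v c = ρ.asAlgebraHom c v :=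
  rfl

theorem orbitMap_of_mul (v : V) (g : G) (c : MonoidAlgebra k G) :
    ρ.orbitMap v (MonoidAlgebra.of k G g * c) = ρ g (ρ.orbitMap v c) := by
  simp only [orbitMap_apply, map_mul, asAlgebraHom_of, Module.End.mul_apply]

theorem orbitMap_one (v : V) : ρ.orbitMap v 1 = v := by
  simp [orbitMap_apply]

end Representation

variable {ρ : Representation k G V}

theorem MonoidAlgebra.lhom_ext_of_equivariant {F F' : MonoidAlgebra k G →ₗ[k] V}
    (hF : ∀ g c, F (of k G g * c) = ρ g (F c)) (hF' : ∀ g c, F' (of k G g * c) = ρ g (F' c))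
    (h : F 1 = F' 1) : F = F' := by
  ext g
  simpa using (hF g 1).trans ((congrArg (ρ g) h).trans (hF' g 1).symm)

theorem MonoidAlgebra.pi_lhom_ext_of_equivariant {ι : Type*} [Fintype ι] [DecidableEq ι]
    {F F' : (ι → MonoidAlgebra k G) →ₗ[k] V}
    (hF : ∀ g f, F (of k G g • f) = ρ g (F f)) (hF' : ∀ g f, F' (of k G g • f) = ρ g (F' f))
    (h : ∀ i, F (Pi.single i 1) = F' (Pi.single i 1)) : F = F' := by
  refine LinearMap.pi_ext' fun i => lhom_ext_of_equivariant (ρ := ρ) ?_ ?_ (h i) <;>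
  · intro g c
    simp only [LinearMap.comp_apply, LinearMap.coe_single, ← smul_eq_mul, Pi.single_smul', hF, hF']

end GroupRing

theorem TensorProduct.map_map_of_comp_eq {R M N P Q : Type*} [CommRing R]
    [AddCommGroup M] [Module R M] [AddCommGroup N] [Module R N]
    [AddCommGroup P] [Module R P] [AddCommGroup Q] [Module R Q]
    {f : M →ₗ[R] N} {f' : P →ₗ[R] Q} {u : M →ₗ[R] M} {v : N →ₗ[R] N} {u' : P →ₗ[R] P}
    {v' : Q →ₗ[R] Q} (hf : f ∘ₗ u = v ∘ₗ f) (hf' : f' ∘ₗ u' = v' ∘ₗ f') (t : M ⊗[R] P) :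
    map f f' (map u u' t) = map v v' (map f f' t) := by
  rw [← LinearMap.comp_apply, ← map_comp, hf, hf', map_comp, LinearMap.comp_apply]

theorem Fin.sum_Iio_sub {M : Type*} [AddCommGroup M] {n : ℕ} (f : ℕ → M) (i : Fin n) :
    ∑ k ∈ Finset.Iio i, (f (k + 1) - f k) = f i - f 0 := by
  refine (Finset.sum_map (Finset.Iio i) Fin.valEmbedding (fun k => f (k + 1) - f k)).symm.trans ?_
  rw [Fin.map_valEmbedding_Iio, Nat.Iio_eq_range, Finset.sum_range_sub]

theorem Fin.sum_Ioi_sub {M : Type*} [AddCommGroup M] {n : ℕ} (f : ℕ → M) (i : Fin n) :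
    ∑ k ∈ Finset.Ioi i, (f (k + 1) - f k) = f n - f (i + 1) := by
  refine (Finset.sum_map (Finset.Ioi i) Fin.valEmbedding (fun k => f (k + 1) - f k)).symm.trans ?_
  rw [Fin.map_valEmbedding_Ioi, ← Finset.Ico_add_one_left_eq_Ioo]
  exact Finset.sum_Ico_sub f i.isLt

namespace SurfaceNonOr

variable {n : ℕ}

theorem r_zero : (r 0 : SurfaceGroup n) = 1 := by
  simp [r]

theorem r_succ (i : Fin n) : (r (i + 1) : SurfaceGroup n) = r i * a i * a i := by
  rw [r, r, List.prod_take_succ _ _ (by simp), mul_assoc, ← pow_two]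
  simp

/-- `r n` is the image of the relator. -/
theorem r_n : (r n : SurfaceGroup n) = 1 := by
  rw [r, List.take_of_length_le (by simp)]
  convert PresentedGroup.one_of_mem (Set.mem_singleton (rel n)) using 1
  change _ = PresentedGroup.mk _ (List.ofFn fun i : Fin n => FreeGroup.of i ^ 2).prod
  rw [map_list_prod, List.map_ofFn]
  rfl

theorem aug_j (g : SurfaceGroup n) : aug (j g) = 1 := MonoidAlgebra.lift_of _ _

theorem j_mul_sub_one (g : SurfaceGroup n) (i : Fin n) :
    j g * (j (a i) - 1) = j (g * a i) - j g := by
  rw [mul_sub, mul_one, map_mul]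

theorem Fa_eq (i : Fin n) : Fa i = j (r i) + j (r i * a i) := by
  rw [Fa, mul_add, mul_one, map_mul]

theorem Fa_mul_sub_one (i : Fin n) : Fa i * (j (a i) - 1) = j (r (i + 1)) - j (r i) := by
  rw [Fa_eq, add_mul, j_mul_sub_one, j_mul_sub_one, r_succ]
  abel

theorem d1_Y (i : Fin n) : d1 (Y i) = j (a i) - 1 := by
  simp [d1, Y, Pi.single_apply]

theorem d1_j_smul_Y (g : SurfaceGroup n) (i : Fin n) : d1 (j g • Y i) = j (g * a i) - j g := by
  rw [map_smul, d1_Y, smul_eq_mul, j_mul_sub_one]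

theorem d1_Fa_smul_Y (i : Fin n) : d1 (Fa i • Y i) = j (r (i + 1)) - j (r i) := by
  rw [map_smul, d1_Y, smul_eq_mul, Fa_mul_sub_one]

theorem d2_one : d2 (1 : P2 n) = ∑ i, Fa i • Y i := by
  ext s
  simp [d2, Y, Pi.single_apply]

noncomputable abbrev repP0 : Representation ℤ (SurfaceGroup n) (P0 n) :=
  Representation.ofModule' (P0 n)

noncomputable abbrev repP1 : Representation ℤ (SurfaceGroup n) (P1 n) :=
  Representation.ofModule' (P1 n)

/-- `G` acts diagonally on each summand `P_p ⊗ P_q` of `(P ⊗ P)_m`. -/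
noncomputable abbrev repT0 : Representation ℤ (SurfaceGroup n) (P0 n ⊗[ℤ] P0 n) :=
  repP0.tprod repP0

noncomputable abbrev repT1 :
    Representation ℤ (SurfaceGroup n) ((P0 n ⊗[ℤ] P1 n) × (P1 n ⊗[ℤ] P0 n)) :=
  (repP0.tprod repP1).prod (repP1.tprod repP0)

noncomputable abbrev repT2 : Representation ℤ (SurfaceGroup n)
    ((P0 n ⊗[ℤ] P2 n) × (P1 n ⊗[ℤ] P1 n) × (P2 n ⊗[ℤ] P0 n)) :=
  (repP0.tprod repP0).prod ((repP1.tprod repP1).prod (repP0.tprod repP0))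

theorem d1z_comp_L1 (g : SurfaceGroup n) : d1z ∘ₗ L1 g = L0 g ∘ₗ d1z :=
  LinearMap.ext fun f => d1.map_smul (j g) f

theorem d2z_comp_L0 (g : SurfaceGroup n) : d2z ∘ₗ L0 g = L1 g ∘ₗ d2z :=
  LinearMap.ext fun c => d2.map_smul (j g) c

/-- The differentials of `P ⊗ P`, `∂(u ⊗ v) = du ⊗ v + (-1)^|u| u ⊗ dv`, in degrees 1 and 2. -/
noncomputable def tensorD1 : (P0 n ⊗[ℤ] P1 n) × (P1 n ⊗[ℤ] P0 n) →ₗ[ℤ] P0 n ⊗[ℤ] P0 n :=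
  (map LinearMap.id d1z).coprod (map d1z LinearMap.id)

noncomputable def tensorD2 : (P0 n ⊗[ℤ] P2 n) × (P1 n ⊗[ℤ] P1 n) × (P2 n ⊗[ℤ] P0 n) →ₗ[ℤ]
    (P0 n ⊗[ℤ] P1 n) × (P1 n ⊗[ℤ] P0 n) :=
  (map LinearMap.id d2z ∘ₗ .fst _ _ _ + map d1z LinearMap.id ∘ₗ .fst _ _ _ ∘ₗ .snd _ _ _).prod
    (map d2z LinearMap.id ∘ₗ .snd _ _ _ ∘ₗ .snd _ _ _ -
      map LinearMap.id d1z ∘ₗ .fst _ _ _ ∘ₗ .snd _ _ _)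

theorem d1z_apply (f : P1 n) : d1z f = d1 f :=
  rfl

theorem d2z_apply (c : P2 n) : d2z c = d2 c :=
  rfl

theorem L0_apply (g : SurfaceGroup n) (c : P0 n) : L0 g c = j g * c :=
  rfl

theorem L1_apply (g : SurfaceGroup n) (f : P1 n) : L1 g f = j g • f :=
  rfl

theorem repT0_apply (g : SurfaceGroup n) (x : P0 n ⊗[ℤ] P0 n) :
    repT0 g x = map (L0 g) (L0 g) x :=
  rfl

theorem repT1_apply (g : SurfaceGroup n) (x : (P0 n ⊗[ℤ] P1 n) × (P1 n ⊗[ℤ] P0 n)) :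
    repT1 g x = (map (L0 g) (L1 g) x.1, map (L1 g) (L0 g) x.2) :=
  rfl

theorem repT2_apply (g : SurfaceGroup n)
    (x : (P0 n ⊗[ℤ] P2 n) × (P1 n ⊗[ℤ] P1 n) × (P2 n ⊗[ℤ] P0 n)) :
    repT2 g x = (map (L0 g) (L0 g) x.1, map (L1 g) (L1 g) x.2.1, map (L0 g) (L0 g) x.2.2) :=
  rfl

theorem tensorD1_apply (x : (P0 n ⊗[ℤ] P1 n) × (P1 n ⊗[ℤ] P0 n)) :
    tensorD1 x = map LinearMap.id d1z x.1 + map d1z LinearMap.id x.2 :=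
  rfl

theorem tensorD2_apply (x : (P0 n ⊗[ℤ] P2 n) × (P1 n ⊗[ℤ] P1 n) × (P2 n ⊗[ℤ] P0 n)) :
    tensorD2 x = (map LinearMap.id d2z x.1 + map d1z LinearMap.id x.2.1,
      map d2z LinearMap.id x.2.2 - map LinearMap.id d1z x.2.1) :=
  rfl

theorem tensorD1_repT1 (g : SurfaceGroup n) (x : (P0 n ⊗[ℤ] P1 n) × (P1 n ⊗[ℤ] P0 n)) :
    tensorD1 (repT1 g x) = repT0 g (tensorD1 x) := by
  have h0 : LinearMap.id ∘ₗ L0 g = L0 g ∘ₗ LinearMap.id := rfl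
  simp only [tensorD1_apply, repT1_apply, map_add, map_map_of_comp_eq h0 (d1z_comp_L1 g),
    map_map_of_comp_eq (d1z_comp_L1 g) h0]
  rfl

theorem tensorD2_repT2 (g : SurfaceGroup n)
    (x : (P0 n ⊗[ℤ] P2 n) × (P1 n ⊗[ℤ] P1 n) × (P2 n ⊗[ℤ] P0 n)) :
    tensorD2 (repT2 g x) = repT1 g (tensorD2 x) := by
  have h0 : LinearMap.id ∘ₗ L0 g = L0 g ∘ₗ LinearMap.id := rfl
  have h1 : LinearMap.id ∘ₗ L1 g = L1 g ∘ₗ LinearMap.id := rfl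
  simp only [tensorD2_apply, repT2_apply, repT1_apply, map_add, map_sub,
    map_map_of_comp_eq h0 (d2z_comp_L0 g), map_map_of_comp_eq (d1z_comp_L1 g) h1,
    map_map_of_comp_eq (d2z_comp_L0 g) h0, map_map_of_comp_eq h1 (d1z_comp_L1 g)]

noncomputable def diag0 : P0 n →ₗ[ℤ] P0 n ⊗[ℤ] P0 n :=
  repT0.orbitMap (1 ⊗ₜ 1)

noncomputable def diag1 : P1 n →ₗ[ℤ] (P0 n ⊗[ℤ] P1 n) × (P1 n ⊗[ℤ] P0 n) :=
  ∑ i, repT1.orbitMap ((1 : P0 n) ⊗ₜ Y i, Y i ⊗ₜ j (a i)) ∘ₗ LinearMap.proj i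

noncomputable def diag2 :
    P2 n →ₗ[ℤ] (P0 n ⊗[ℤ] P2 n) × (P1 n ⊗[ℤ] P1 n) × (P2 n ⊗[ℤ] P0 n) :=
  repT2.orbitMap ((1 : P0 n) ⊗ₜ (1 : P2 n), Delta11 n, (1 : P2 n) ⊗ₜ (1 : P0 n))

theorem diag0_j_mul (g : SurfaceGroup n) (c : P0 n) : diag0 (j g * c) = repT0 g (diag0 c) :=
  repT0.orbitMap_of_mul _ g c

theorem diag0_one : diag0 (1 : P0 n) = 1 ⊗ₜ 1 :=
  repT0.orbitMap_one _

theorem diag0_j (g : SurfaceGroup n) : diag0 (j g) = j g ⊗ₜ j g := by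
  rw [← mul_one (j g), diag0_j_mul, diag0_one, repT0_apply, map_tmul, L0_apply, mul_one]

theorem diag1_apply (f : P1 n) :
    diag1 f = ∑ i, repT1.orbitMap ((1 : P0 n) ⊗ₜ Y i, Y i ⊗ₜ j (a i)) (f i) := by
  simp [diag1]

theorem diag1_j_smul (g : SurfaceGroup n) (f : P1 n) : diag1 (j g • f) = repT1 g (diag1 f) := by
  simp only [diag1_apply, map_sum, Pi.smul_apply, smul_eq_mul]
  exact Finset.sum_congr rfl fun i _ => repT1.orbitMap_of_mul _ g (f i)

theorem diag1_Y (i : Fin n) : diag1 (Y i) = ((1 : P0 n) ⊗ₜ Y i, Y i ⊗ₜ j (a i)) := by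
  rw [diag1_apply, Finset.sum_eq_single i (fun k _ hk => by simp [Y, hk]) (by simp)]
  simp [Y, Representation.orbitMap_one]

theorem diag1_j_smul_Y (g : SurfaceGroup n) (i : Fin n) :
    diag1 (j g • Y i) = (j g ⊗ₜ (j g • Y i), (j g • Y i) ⊗ₜ j (g * a i)) := by
  rw [diag1_j_smul, diag1_Y, repT1_apply]
  simp only [map_tmul, L0_apply, L1_apply, mul_one, map_mul]

theorem diag2_j_mul (g : SurfaceGroup n) (c : P2 n) : diag2 (j g * c) = repT2 g (diag2 c) :=
  repT2.orbitMap_of_mul _ g c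

theorem diag2_one :
    diag2 (1 : P2 n) = ((1 : P0 n) ⊗ₜ (1 : P2 n), Delta11 n, (1 : P2 n) ⊗ₜ (1 : P0 n)) :=
  repT2.orbitMap_one _

theorem augaug_diag0 (c : P0 n) : augaug (diag0 c) = aug c := by
  have h : augaug ∘ₗ diag0 = (augz : P0 n →ₗ[ℤ] ℤ) := by
    ext g
    change TensorProduct.lid ℤ ℤ (map augz augz (diag0 (j g))) = aug (j g)
    rw [diag0_j, map_tmul, lid_tmul]
    simp [augz, aug_j]
  exact LinearMap.congr_fun h c

theorem tensorD1_diag1 : tensorD1 ∘ₗ diag1 = diag0 ∘ₗ (d1z : P1 n →ₗ[ℤ] P0 n) := by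
  refine MonoidAlgebra.pi_lhom_ext_of_equivariant (ρ := repT0) (fun g f => ?_) (fun g f => ?_)
    (fun i => ?_)
  · exact (congrArg tensorD1 (diag1_j_smul g f)).trans (tensorD1_repT1 g _)
  · exact (congrArg diag0 (d1.map_smul (j g) f)).trans (diag0_j_mul g _)
  · change tensorD1 (diag1 (Y i)) = diag0 (d1 (Y i))
    simp only [diag1_Y, tensorD1_apply, map_tmul, LinearMap.id_apply, d1z_apply, d1_Y, map_sub,
      diag0_j, diag0_one, tmul_sub, sub_tmul]
    abel

theorem diag1_d2_one : diag1 (d2 (1 : P2 n)) =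
    ∑ i : Fin n, (diag1 ((j (r i) : A n) • Y i) + diag1 (j (r i * a i) • Y i)) := by
  simp only [d2_one, Fa_eq, add_smul, map_sum, map_add]

theorem map_d1z_id_Delta11 : map d1z LinearMap.id (Delta11 n) =
    ∑ i : Fin n, (((j (r i) : A n) - 1) ⊗ₜ (Fa i • Y i) +
      (j (r i * a i) - j (r i)) ⊗ₜ (j (r i * a i) • Y i)) := by
  rw [Delta11, map_sum]
  refine Finset.sum_congr rfl fun i _ => ?_
  simp only [map_add, map_sum, map_tmul, LinearMap.id_apply, d1z_apply, d1_Fa_smul_Y,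
    d1_j_smul_Y]
  rw [← sum_tmul, Fin.sum_Iio_sub (fun k => (j (r k) : A n)), r_zero, map_one]

/-- The telescoping in the second factor closes up because `r n = 1`. -/
theorem map_id_d1z_Delta11 : map LinearMap.id d1z (Delta11 n) =
    ∑ i : Fin n, ((Fa i • Y i) ⊗ₜ (1 - j (r (i + 1))) +
      ((j (r i) : A n) • Y i) ⊗ₜ (j (r (i + 1)) - j (r i * a i))) := by
  rw [Delta11, map_sum]
  simp only [map_add, map_sum, map_tmul, LinearMap.id_apply, d1z_apply, d1_Fa_smul_Y,
    d1_j_smul_Y, ← r_succ]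
  rw [Finset.sum_add_distrib, Finset.sum_add_distrib,
    Finset.sum_comm' (t' := Finset.univ) (s' := Finset.Ioi) (fun i k => by simp)]
  simp only [← tmul_sum, Fin.sum_Ioi_sub (fun k => (j (r k) : A n)), r_n, map_one]

theorem tensorD2_diag2_one : tensorD2 (diag2 (1 : P2 n)) = diag1 (d2 1) := by
  rw [diag1_d2_one, tensorD2_apply, diag2_one]
  simp only [diag1_j_smul_Y, map_tmul, LinearMap.id_apply, d2z_apply, d2_one, tmul_sum, sum_tmul,
    map_d1z_id_Delta11, map_id_d1z_Delta11, ← r_succ, ← Finset.sum_add_distrib,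
    ← Finset.sum_sub_distrib]
  refine Prod.ext ?_ ?_ <;>
  · simp only [Prod.fst_sum, Prod.snd_sum, Prod.fst_add, Prod.snd_add]
    refine Finset.sum_congr rfl fun i _ => ?_
    simp only [Fa_eq, add_smul, tmul_add, add_tmul, tmul_sub, sub_tmul]
    abel

theorem tensorD2_diag2 : tensorD2 ∘ₗ diag2 = diag1 ∘ₗ (d2z : P2 n →ₗ[ℤ] P1 n) := by
  refine MonoidAlgebra.lhom_ext_of_equivariant (ρ := repT1) (fun g c => ?_) (fun g c => ?_)
    tensorD2_diag2_one
  · exact (congrArg tensorD2 (diag2_j_mul g c)).trans (tensorD2_repT2 g _)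
  · exact (congrArg diag1 (d2.map_smul (j g) c)).trans (diag1_j_smul g _)

theorem statement4_general (n : ℕ) :
    ∃ (Δ0 : P0 n →ₗ[ℤ] P0 n ⊗[ℤ] P0 n)
      (Δ1 : P1 n →ₗ[ℤ] (P0 n ⊗[ℤ] P1 n) × (P1 n ⊗[ℤ] P0 n))
      (Δ2 : P2 n →ₗ[ℤ] (P0 n ⊗[ℤ] P2 n) × (P1 n ⊗[ℤ] P1 n) × (P2 n ⊗[ℤ] P0 n)),
      -- `ℤG`-linearity (equivariance for the diagonal action on the target)
      (∀ (g : SurfaceGroup n) (c : P0 n),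
        Δ0 (j g * c) = TensorProduct.map (L0 g) (L0 g) (Δ0 c)) ∧
      (∀ (g : SurfaceGroup n) (f : P1 n),
        Δ1 (j g • f) = (TensorProduct.map (L0 g) (L1 g) (Δ1 f).1,
                        TensorProduct.map (L1 g) (L0 g) (Δ1 f).2)) ∧
      (∀ (g : SurfaceGroup n) (c : P2 n),
        Δ2 (j g * c) = (TensorProduct.map (L0 g) (L0 g) (Δ2 c).1,
                        TensorProduct.map (L1 g) (L1 g) (Δ2 c).2.1,
                        TensorProduct.map (L0 g) (L0 g) (Δ2 c).2.2)) ∧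
      -- compatibility with the augmentation: `(ε ⊗ ε) ∘ Δ₀ = ε`
      (∀ c : P0 n, augaug (Δ0 c) = aug c) ∧
      -- chain map condition in degree 1: `∂₁ ∘ Δ₁ = Δ₀ ∘ d₁`
      (∀ f : P1 n,
        TensorProduct.map LinearMap.id d1z ((Δ1 f).1)
          + TensorProduct.map d1z LinearMap.id ((Δ1 f).2) = Δ0 (d1 f)) ∧
      -- chain map condition in degree 2: `∂₂ ∘ Δ₂ = Δ₁ ∘ d₂`
      (∀ c : P2 n,
        (TensorProduct.map LinearMap.id d2z ((Δ2 c).1)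
            + TensorProduct.map d1z LinearMap.id ((Δ2 c).2.1),
         TensorProduct.map d2z LinearMap.id ((Δ2 c).2.2)
            - TensorProduct.map LinearMap.id d1z ((Δ2 c).2.1)) = Δ1 (d2 c)) ∧
      -- the stated values on generators
      Δ0 (1 : P0 n) = (1 : P0 n) ⊗ₜ[ℤ] (1 : P0 n) ∧
      (∀ i : Fin n, Δ1 (Y i) = ((1 : P0 n) ⊗ₜ[ℤ] Y i, Y i ⊗ₜ[ℤ] j (a i))) ∧
      (Δ2 (1 : P2 n)).1 = (1 : P0 n) ⊗ₜ[ℤ] (1 : P2 n) ∧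
      (Δ2 (1 : P2 n)).2.1 = Delta11 n :=
  ⟨diag0, diag1, diag2, diag0_j_mul, diag1_j_smul, diag2_j_mul, augaug_diag0,
    LinearMap.congr_fun tensorD1_diag1, LinearMap.congr_fun tensorD2_diag2, diag0_one, diag1_Y,
    by rw [diag2_one], by rw [diag2_one]⟩

/-- there is a diagonal approximation `Δ : P → P ⊗ P` (a chain map of
complexes of `ℤG`-modules, where `P ⊗ P` carries the diagonal `G`-action, compatible with
the augmentations) whose components take the stated values on the generators `x`, `yᵢ`
and `w`.  `ℤG`-linearity into the diagonal action is expressed as `ℤ`-linearity together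
with `G`-equivariance. -/
theorem statement4 (n : ℕ) (hn : 2 ≤ n) :
    ∃ (Δ0 : P0 n →ₗ[ℤ] P0 n ⊗[ℤ] P0 n)
      (Δ1 : P1 n →ₗ[ℤ] (P0 n ⊗[ℤ] P1 n) × (P1 n ⊗[ℤ] P0 n))
      (Δ2 : P2 n →ₗ[ℤ] (P0 n ⊗[ℤ] P2 n) × (P1 n ⊗[ℤ] P1 n) × (P2 n ⊗[ℤ] P0 n)),
      -- `ℤG`-linearity (equivariance for the diagonal action on the target)
      (∀ (g : SurfaceGroup n) (c : P0 n),
        Δ0 (j g * c) = TensorProduct.map (L0 g) (L0 g) (Δ0 c)) ∧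
      (∀ (g : SurfaceGroup n) (f : P1 n),
        Δ1 (j g • f) = (TensorProduct.map (L0 g) (L1 g) (Δ1 f).1,
                        TensorProduct.map (L1 g) (L0 g) (Δ1 f).2)) ∧
      (∀ (g : SurfaceGroup n) (c : P2 n),
        Δ2 (j g * c) = (TensorProduct.map (L0 g) (L0 g) (Δ2 c).1,
                        TensorProduct.map (L1 g) (L1 g) (Δ2 c).2.1,
                        TensorProduct.map (L0 g) (L0 g) (Δ2 c).2.2)) ∧
      -- compatibility with the augmentation: `(ε ⊗ ε) ∘ Δ₀ = ε`
      (∀ c : P0 n, augaug (Δ0 c) = aug c) ∧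
      -- chain map condition in degree 1: `∂₁ ∘ Δ₁ = Δ₀ ∘ d₁`
      (∀ f : P1 n,
        TensorProduct.map LinearMap.id d1z ((Δ1 f).1)
          + TensorProduct.map d1z LinearMap.id ((Δ1 f).2) = Δ0 (d1 f)) ∧
      -- chain map condition in degree 2: `∂₂ ∘ Δ₂ = Δ₁ ∘ d₂`
      (∀ c : P2 n,
        (TensorProduct.map LinearMap.id d2z ((Δ2 c).1)
            + TensorProduct.map d1z LinearMap.id ((Δ2 c).2.1),
         TensorProduct.map d2z LinearMap.id ((Δ2 c).2.2)
            - TensorProduct.map LinearMap.id d1z ((Δ2 c).2.1)) = Δ1 (d2 c)) ∧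
      -- the stated values on generators
      Δ0 (1 : P0 n) = (1 : P0 n) ⊗ₜ[ℤ] (1 : P0 n) ∧
      (∀ i : Fin n, Δ1 (Y i) = ((1 : P0 n) ⊗ₜ[ℤ] Y i, Y i ⊗ₜ[ℤ] j (a i))) ∧
      (Δ2 (1 : P2 n)).1 = (1 : P0 n) ⊗ₜ[ℤ] (1 : P2 n) ∧
      (Δ2 (1 : P2 n)).2.1 = Delta11 n :=
  statement4_general n

end SurfaceNonOr
end

section
/- Let G = ℤ ⊕ ℤ and let K = ℤ ⊕ ℤ be the ℤG-module on which both standard generators (1,0) and (0,1) of G act by the matrix φ = [[2,1],[1,1]] ∈ GL_2(ℤ) (so (m,n) ∈ G acts by φ^{m+n}). Then H^0(G, K) = 0, H^1(G, K) = 0, and H^2(G, K) = 0. -/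
/-! The element `c = (1,0)` is central in `G` and acts by `φ`, and `1 - φ` is invertible over `ℤ`
(`det (1 - φ) = -1`). For any central `c` with `1 - ρ c` invertible, low-degree cohomology vanishes
with explicit primitives, using that `(1 - ρ c)⁻¹` commutes with the action: an invariant `v` has
`(1 - ρ c) v = 0`; a 1-cocycle `f` is the coboundary of `-(1 - ρ c)⁻¹ (f c)`; a 2-cocycle `f` is
the coboundary of `g ↦ (1 - ρ c)⁻¹ (f (g, c) - f (c, g))`. -/

namespace TorusExample

/-- The group `G = ℤ ⊕ ℤ` (written multiplicatively). -/
abbrev G := Multiplicative (ℤ × ℤ)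

/-- The matrix `φ = [[2,1],[1,1]]`. -/
def phiM : Matrix (Fin 2) (Fin 2) ℤ := !![2, 1; 1, 1]

/-- The inverse matrix `φ⁻¹ = [[1,-1],[-1,2]]`. -/
def psiM : Matrix (Fin 2) (Fin 2) ℤ := !![1, -1; -1, 2]

/-- `φ` as a unit of the matrix ring (it lies in `GL₂(ℤ)` since `det φ = 1`). -/
def phiUnit : (Matrix (Fin 2) (Fin 2) ℤ)ˣ where
  val := phiM
  inv := psiM
  val_inv := by decide
  inv_val := by decide

/-- `φ` as an invertible `ℤ`-linear endomorphism of `ℤ²`. -/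
noncomputable def phiEnd : (Module.End ℤ (Fin 2 → ℤ))ˣ :=
  Units.map (Matrix.toLinAlgEquiv' : Matrix (Fin 2) (Fin 2) ℤ ≃ₐ[ℤ] _).toRingEquiv.toMonoidHom
    phiUnit

/-- The representation of `G = ℤ ⊕ ℤ` on `K = ℤ ⊕ ℤ` in which both standard generators
`(1,0)` and `(0,1)` act by `φ`; thus `(m,n)` acts by `φ^{m+n}`. -/
noncomputable def rho : Representation ℤ G (Fin 2 → ℤ) :=
  ((Units.coeHom (Module.End ℤ (Fin 2 → ℤ))).comp
      ((zpowersHom ((Module.End ℤ (Fin 2 → ℤ))ˣ)) phiEnd)).comp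
    (AddMonoidHom.toMultiplicative (AddMonoidHom.fst ℤ ℤ + AddMonoidHom.snd ℤ ℤ))

/-- The `ℤG`-module `K`. -/
noncomputable def K : Rep ℤ G := Rep.of rho

open groupCohomology

section CentralElement

universe u

variable {k Γ : Type u} [CommRing k] [Group Γ] {A : Rep k Γ} {c : Γ}

lemma commute_ρ_of_mem_center (hc : c ∈ Subgroup.center Γ) (g : Γ) :
    Commute (A.ρ c) (A.ρ g) := by
  rw [Commute, SemiconjBy, ← map_mul, ← map_mul, Subgroup.mem_center_iff.1 hc g]

variable (hu : IsUnit (1 - A.ρ c))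
include hu

lemma inv_one_sub_ρ_apply_sub (v : A) : (↑hu.unit⁻¹ : Module.End k A) (v - A.ρ c v) = v := by
  simpa only [Module.End.mul_apply, LinearMap.sub_apply, Module.End.one_apply]
    using LinearMap.congr_fun hu.val_inv_mul v

lemma inv_one_sub_ρ_apply_ρ (hc : c ∈ Subgroup.center Γ) (g : Γ) (v : A) :
    (↑hu.unit⁻¹ : Module.End k A) (A.ρ g v) = A.ρ g ((↑hu.unit⁻¹ : Module.End k A) v) := by
  have : Commute (↑hu.unit : Module.End k A) (A.ρ g) := by
    rw [hu.unit_spec]; exact (Commute.one_left _).sub_left (commute_ρ_of_mem_center hc g)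
  exact LinearMap.congr_fun this.units_inv_left v

lemma subsingleton_invariants_of_isUnit_one_sub_ρ : Subsingleton A.ρ.invariants := by
  refine subsingleton_of_forall_eq 0 fun ⟨v, hv⟩ => Subtype.ext ?_
  change v = 0
  rw [← inv_one_sub_ρ_apply_sub hu v, hv c, sub_self, map_zero]

lemma subsingleton_H0_of_isUnit_one_sub_ρ : Subsingleton (H0 A) :=
  have := subsingleton_invariants_of_isUnit_one_sub_ρ hu
  (H0Iso A).toLinearEquiv.toEquiv.subsingleton

lemma mem_coboundaries₁_of_isUnit_one_sub_ρ (hc : c ∈ Subgroup.center Γ) (f : cocycles₁ A) :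
    ⇑f ∈ coboundaries₁ A := by
  have hf := (mem_cocycles₁_iff f).1 f.2
  refine ⟨-(↑hu.unit⁻¹ : Module.End k A) (f c), funext fun g => ?_⟩
  have hfg : f g - A.ρ c (f g) = f c - A.ρ g (f c) := by
    have := hf g c
    rw [Subgroup.mem_center_iff.1 hc g, hf c g] at this
    linear_combination (norm := module) -this
  rw [d₀₁_hom_apply, map_neg, ← inv_one_sub_ρ_apply_ρ hu hc, ← inv_one_sub_ρ_apply_sub hu (f g),
    hfg, map_sub]
  abel

lemma subsingleton_H1_of_isUnit_one_sub_ρ (hc : c ∈ Subgroup.center Γ) : Subsingleton (H1 A) :=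
  subsingleton_of_forall_eq 0 fun x => H1_induction_on x fun f =>
    (H1π_eq_zero_iff f).2 (mem_coboundaries₁_of_isUnit_one_sub_ρ hu hc f)

lemma mem_coboundaries₂_of_isUnit_one_sub_ρ (hc : c ∈ Subgroup.center Γ) (f : cocycles₂ A) :
    ⇑f ∈ coboundaries₂ A := by
  have hf := (mem_cocycles₂_def f).1 f.2
  have hcomm := Subgroup.mem_center_iff.1 hc
  refine ⟨fun g => (↑hu.unit⁻¹ : Module.End k A) (f (g, c) - f (c, g)), funext fun ⟨g, h⟩ => ?_⟩
  have hfgh : A.ρ g (f (h, c) - f (c, h)) - (f (g * h, c) - f (c, g * h)) + (f (g, c) - f (c, g))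
      = f (g, h) - A.ρ c (f (g, h)) := by
    have e₁ := hf g h c
    have e₂ := hf g c h
    have e₃ := hf c g h
    rw [hcomm h] at e₁
    rw [hcomm g] at e₂
    rw [map_sub]
    linear_combination (norm := module) e₁ - e₂ + e₃
  rw [d₁₂_hom_apply, ← inv_one_sub_ρ_apply_ρ hu hc, ← map_sub, ← map_add, hfgh,
    inv_one_sub_ρ_apply_sub hu]

lemma subsingleton_H2_of_isUnit_one_sub_ρ (hc : c ∈ Subgroup.center Γ) : Subsingleton (H2 A) :=
  subsingleton_of_forall_eq 0 fun x => H2_induction_on x fun f =>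
    (H2π_eq_zero_iff f).2 (mem_coboundaries₂_of_isUnit_one_sub_ρ hu hc f)

end CentralElement

lemma isUnit_one_sub_phiEnd : IsUnit (1 - (phiEnd : Module.End ℤ (Fin 2 → ℤ))) := by
  have hdet : IsUnit (1 - phiM).det := by
    rw [show (1 - phiM).det = -1 by decide]
    exact isUnit_one.neg
  have : (1 - (phiEnd : Module.End ℤ (Fin 2 → ℤ))) = Matrix.toLinAlgEquiv' (1 - phiM) := by
    rw [map_sub, map_one]; rfl
  rw [this]
  exact ((Matrix.isUnit_iff_isUnit_det _).2 hdet).map _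

/-- Remark 3.3: for `G = ℤ ⊕ ℤ` acting on `K = ℤ ⊕ ℤ` through the
matrix `φ = [[2,1],[1,1]]` (both generators acting by `φ`), all of `H⁰(G,K)`, `H¹(G,K)`
and `H²(G,K)` vanish. -/
theorem statement12 :
    Subsingleton (groupCohomology K 0) ∧
    Subsingleton (groupCohomology K 1) ∧
    Subsingleton (groupCohomology K 2) := by
  let c : G := Multiplicative.ofAdd (1, 0)
  have hc : c ∈ Subgroup.center G := Subgroup.mem_center_iff.2 fun g => mul_comm g c
  have hu : IsUnit (1 - K.ρ c) := isUnit_one_sub_phiEnd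
  exact ⟨subsingleton_H0_of_isUnit_one_sub_ρ hu, subsingleton_H1_of_isUnit_one_sub_ρ hu hc,
    subsingleton_H2_of_isUnit_one_sub_ρ hu hc⟩

end TorusExample
end

section
/- Let ℤ denote the trivial ℤG-module. Then there are isomorphisms of abelian groups H^0(G, ℤ) ≅ ℤ, H^1(G, ℤ) ≅ ℤ^{2n}, and H^2(G, ℤ) ≅ ℤ. -/
open scoped TensorProduct
open scoped commutatorElement

/-!
`H⁰(G, ℤ) = ℤ` and `H¹(G, ℤ) = Hom(G, ℤ) = ℤ²ⁿ`, the latter because the relator lies in the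
commutator subgroup of the free group on the `aᵢ, bᵢ`.

For `H²`, a normalized 2-cocycle `c` with values in a trivial module `M` defines a central
extension `M → E_c → G`. Lifting the generators to `(0, aᵢ), (0, bᵢ) ∈ E_c` and evaluating the
relator gives an element of `E_c` over `1 ∈ G`, i.e. an element of `M`: the transgression of `c`.
It is additive in `c`, vanishes on coboundaries (for which `E_c ≅ M × G`), and vanishes only on
coboundaries, since then the lifted generators define a splitting `G → E_c`. Finally the cup
product `α ∪ β` of the duals of `a₁` and `b₁` has transgression
`∑ᵢ (α(aᵢ)β(bᵢ) - α(bᵢ)β(aᵢ)) = 1`, so the transgression is an isomorphism `H²(G, ℤ) ≅ ℤ`.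
-/

universe u

structure NormalizedCocycle (G M : Type*) [Group G] [AddCommGroup M] where
  toFun : G → G → M
  cocycle (g h k : G) : toFun (g * h) k + toFun g h = toFun h k + toFun g (h * k)
  map_one_one : toFun 1 1 = 0

namespace NormalizedCocycle

section Extension

variable {G M M' : Type*} [Group G] [AddCommGroup M] [AddCommGroup M']

instance : CoeFun (NormalizedCocycle G M) fun _ => G → G → M := ⟨toFun⟩

@[ext]
structure Extension (c : NormalizedCocycle G M) where
  fst : M
  snd : G

variable (c : NormalizedCocycle G M)

theorem map_one_left (g : G) : c 1 g = 0 := by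
  simpa [c.map_one_one] using c.cocycle 1 1 g

theorem map_one_right (g : G) : c g 1 = 0 := by
  simpa [c.map_one_left] using c.cocycle g 1 1

theorem map_mul_inv (g : G) : c g g⁻¹ = c g⁻¹ g := by
  simpa [c.map_one_left, c.map_one_right] using c.cocycle g g⁻¹ g

theorem apply_one_of_eq_coboundary {φ : G → M} (hφ : ∀ g h, c g h = φ g + φ h - φ (g * h)) :
    φ 1 = 0 := by
  simpa [c.map_one_one] using (hφ 1 1).symm

def prod (c' : NormalizedCocycle G M') : NormalizedCocycle G (M × M') where
  toFun g h := (c g h, c' g h)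
  cocycle g h k := Prod.ext (c.cocycle g h k) (c'.cocycle g h k)
  map_one_one := Prod.ext c.map_one_one c'.map_one_one

namespace Extension

variable {c}

instance : Mul c.Extension := ⟨fun x y => ⟨x.fst + y.fst + c x.snd y.snd, x.snd * y.snd⟩⟩
instance : One c.Extension := ⟨⟨0, 1⟩⟩
instance : Inv c.Extension := ⟨fun x => ⟨-x.fst - c x.snd x.snd⁻¹, x.snd⁻¹⟩⟩

@[simp] theorem fst_mul (x y : c.Extension) : (x * y).fst = x.fst + y.fst + c x.snd y.snd := rfl
@[simp] theorem snd_mul (x y : c.Extension) : (x * y).snd = x.snd * y.snd := rfl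
@[simp] theorem fst_one : (1 : c.Extension).fst = 0 := rfl
@[simp] theorem snd_one : (1 : c.Extension).snd = 1 := rfl
@[simp] theorem fst_inv (x : c.Extension) : x⁻¹.fst = -x.fst - c x.snd x.snd⁻¹ := rfl
@[simp] theorem snd_inv (x : c.Extension) : x⁻¹.snd = x.snd⁻¹ := rfl

instance : Group c.Extension where
  mul_assoc x y z := by
    ext
    · simp only [fst_mul, snd_mul]
      linear_combination (norm := abel) c.cocycle x.snd y.snd z.snd
    · exact mul_assoc _ _ _
  one_mul x := by ext <;> simp [map_one_left]
  mul_one x := by ext <;> simp [map_one_right]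
  inv_mul_cancel x := by
    ext
    · simp only [fst_mul, fst_inv, snd_inv, fst_one, ← map_mul_inv]
      abel
    · exact inv_mul_cancel _

@[simps]
def sndHom : c.Extension →* G where
  toFun := snd
  map_one' := rfl
  map_mul' _ _ := rfl

variable {c' : NormalizedCocycle G M'}

@[simps]
def map (φ : M →+ M') (hφ : ∀ g h, c' g h = φ (c g h)) : c.Extension →* c'.Extension where
  toFun x := ⟨φ x.fst, x.snd⟩
  map_one' := by ext <;> simp
  map_mul' x y := by ext <;> simp [hφ]

@[simps]
def toProd (φ : G → M) (hφ : ∀ g h, c g h = φ g + φ h - φ (g * h)) :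
    c.Extension →* Multiplicative M × G where
  toFun x := (.ofAdd (x.fst + φ x.snd), x.snd)
  map_one' := by ext <;> simp [c.apply_one_of_eq_coboundary hφ]
  map_mul' x y := by
    ext
    · simp only [fst_mul, snd_mul, hφ, Prod.fst_mul, ← ofAdd_add, EmbeddingLike.apply_eq_iff_eq]
      abel
    · rfl

end Extension

end Extension

section Cup

variable {G R : Type*} [Group G] [CommRing R]

def cup (α β : Additive G →+ R) : NormalizedCocycle G R where
  toFun g h := α (.ofMul g) * β (.ofMul h)
  cocycle g h k := by simp only [ofMul_mul, map_add]; ring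
  map_one_one := by simp

variable {α β : Additive G →+ R}

@[simp]
theorem cup_apply (g h : G) : cup α β g h = α (.ofMul g) * β (.ofMul h) := rfl

theorem fst_mul_cup (x y : (cup α β).Extension) (hx : α (.ofMul x.snd) = 0) :
    (x * y).fst = x.fst + y.fst := by
  rw [Extension.fst_mul, cup_apply, hx, zero_mul, add_zero]

theorem fst_list_prod_cup (l : List (cup α β).Extension)
    (hl : ∀ x ∈ l, α (.ofMul x.snd) = 0) : l.prod.fst = (l.map Extension.fst).sum := by
  induction l with
  | nil => rfl
  | cons x l ih =>
    rw [List.prod_cons, fst_mul_cup _ _ (hl x List.mem_cons_self),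
      ih fun y hy => hl y (List.mem_cons_of_mem x hy), List.map_cons, List.sum_cons]

theorem fst_commutator_cup (x y : (cup α β).Extension) :
    ⁅x, y⁆.fst = α (.ofMul x.snd) * β (.ofMul y.snd) - α (.ofMul y.snd) * β (.ofMul x.snd) := by
  simp only [commutatorElement_def, Extension.fst_mul, Extension.fst_inv, Extension.snd_mul,
    Extension.snd_inv, cup_apply, ofMul_mul, ofMul_inv, map_add, map_neg]
  ring

end Cup

section Transgression

variable {α : Type*} {rels : Set (FreeGroup α)} {M M' : Type*} [AddCommGroup M] [AddCommGroup M']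

def liftOf (c : NormalizedCocycle (PresentedGroup rels) M) : FreeGroup α →* c.Extension :=
  FreeGroup.lift fun x => ⟨0, PresentedGroup.of x⟩

def transgression (c : NormalizedCocycle (PresentedGroup rels) M) (r : FreeGroup α) : M :=
  (c.liftOf r).fst

variable (c : NormalizedCocycle (PresentedGroup rels) M)

@[simp]
theorem liftOf_of (x : α) : c.liftOf (.of x) = ⟨0, .of x⟩ := FreeGroup.lift_apply_of

theorem snd_liftOf (w : FreeGroup α) : (c.liftOf w).snd = PresentedGroup.mk rels w := by
  change Extension.sndHom.comp c.liftOf w = _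
  congr 1
  ext x
  rfl

theorem transgression_map {c' : NormalizedCocycle (PresentedGroup rels) M'} (φ : M →+ M')
    (hφ : ∀ g h, c' g h = φ (c g h)) (r : FreeGroup α) :
    c'.transgression r = φ (c.transgression r) := by
  have : (Extension.map φ hφ).comp c.liftOf = c'.liftOf := by
    ext x <;> simp
  rw [transgression, ← this]
  rfl

theorem transgression_add {c' c'' : NormalizedCocycle (PresentedGroup rels) M}
    (h : ∀ g h, c'' g h = c g h + c' g h) (r : FreeGroup α) :
    c''.transgression r = c.transgression r + c'.transgression r := by
  let p := c.prod c'
  rw [transgression_map p (.fst M M) (fun _ _ => rfl),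
    transgression_map p (.snd M M) (fun _ _ => rfl), transgression_map p (.fst M M + .snd M M) h]
  rfl

theorem transgression_eq_zero_of_coboundary {r : FreeGroup α} (hr : r ∈ rels)
    (hrc : r ∈ commutator (FreeGroup α)) (φ : PresentedGroup rels → M)
    (hφ : ∀ g h, c g h = φ g + φ h - φ (g * h)) : c.transgression r = 0 := by
  have hprod : (Extension.toProd φ hφ).comp c.liftOf =
      (FreeGroup.lift fun x => Multiplicative.ofAdd (φ (.of x))).prod (PresentedGroup.mk rels) := by
    ext x
    · simp
    · rfl
  have h1 : Extension.toProd φ hφ (c.liftOf r) = 1 := by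
    rw [← MonoidHom.comp_apply, hprod, MonoidHom.prod_apply,
      Abelianization.commutator_subset_ker _ hrc, PresentedGroup.one_of_mem hr]
    rfl
  have hsnd : (c.liftOf r).snd = 1 := congrArg Prod.snd h1
  have hfst : (c.liftOf r).fst + φ (c.liftOf r).snd = 0 := congrArg Prod.fst h1
  rwa [hsnd, c.apply_one_of_eq_coboundary hφ, add_zero] at hfst

theorem exists_coboundary_of_transgression_eq_zero (h : ∀ r ∈ rels, c.transgression r = 0) :
    ∃ φ : PresentedGroup rels → M, ∀ g h, c g h = φ g + φ h - φ (g * h) := by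
  have hrels : ∀ r ∈ rels, c.liftOf r = 1 := fun r hr =>
    Extension.ext (h r hr) ((c.snd_liftOf r).trans (PresentedGroup.one_of_mem hr))
  let s : PresentedGroup rels →* c.Extension := PresentedGroup.toGroup hrels
  have hs_of (x : α) : s (.of x) = ⟨0, .of x⟩ := PresentedGroup.toGroup.of hrels
  have hs : ∀ g, (s g).snd = g := by
    have : Extension.sndHom.comp s = .id _ := PresentedGroup.ext fun x => by simp [hs_of]
    exact fun g => DFunLike.congr_fun this g
  refine ⟨fun g => -(s g).fst, fun g h => ?_⟩
  have := congrArg Extension.fst (map_mul s g h)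
  rw [Extension.fst_mul, hs, hs] at this
  dsimp only
  rw [this]
  abel

end Transgression

section Cohomology

open groupCohomology

variable {G M : Type} [Group G] [AddCommGroup M]

def ofCocycles₂ (f : cocycles₂ (Rep.trivial ℤ G M)) : NormalizedCocycle G M where
  toFun g h := f (g, h) - f (1, 1)
  cocycle g h k := by
    have := (mem_cocycles₂_iff f).1 f.2 g h k
    rw [Rep.trivial_ρ_apply] at this
    linear_combination (norm := abel_nf) this
  map_one_one := sub_self _

def toCocycles₂ (c : NormalizedCocycle G M) : cocycles₂ (Rep.trivial ℤ G M) :=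
  ⟨fun p => c p.1 p.2, (mem_cocycles₂_iff _).2 fun g h k => c.cocycle g h k⟩

theorem ofCocycles₂_toCocycles₂_apply (c : NormalizedCocycle G M) (g h : G) :
    ofCocycles₂ c.toCocycles₂ g h = c g h := by
  change c g h - c 1 1 = c g h
  rw [c.map_one_one, sub_zero]

theorem mem_coboundaries₂_iff_ofCocycles₂ (f : cocycles₂ (Rep.trivial ℤ G M)) :
    ⇑f ∈ coboundaries₂ (Rep.trivial ℤ G M) ↔
      ∃ φ : G → M, ∀ g h, ofCocycles₂ f g h = φ g + φ h - φ (g * h) := by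
  constructor
  · rintro ⟨x, hx⟩
    refine ⟨fun g => x g - x 1, fun g h => ?_⟩
    change f (g, h) - f (1, 1) = _
    rw [← hx]
    simp only [d₁₂_hom_apply, Representation.trivial_apply, mul_one]
    abel
  · rintro ⟨φ, hφ⟩
    refine ⟨fun g => φ g + f (1, 1), funext fun p => ?_⟩
    have := hφ p.1 p.2
    change f p - f (1, 1) = _ at this
    simp only [d₁₂_hom_apply, Representation.trivial_apply]
    rw [sub_eq_iff_eq_add.1 this]
    abel

end Cohomology

section CocyclesTransgression

open groupCohomology

variable {α : Type} (rels : Set (FreeGroup α)) (M : Type) [AddCommGroup M]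

def cocyclesTransgression (r : FreeGroup α) :
    cocycles₂ (Rep.trivial ℤ (PresentedGroup rels) M) →ₗ[ℤ] M :=
  AddMonoidHom.toIntLinearMap <| AddMonoidHom.mk' (fun f => (ofCocycles₂ f).transgression r)
    fun f f' => transgression_add _ (fun g h => by
      change f (g, h) + f' (g, h) - (f (1, 1) + f' (1, 1)) =
        f (g, h) - f (1, 1) + (f' (g, h) - f' (1, 1))
      abel) r

variable {rels M}

theorem cocyclesTransgression_toCocycles₂ (r : FreeGroup α)
    (c : NormalizedCocycle (PresentedGroup rels) M) :
    cocyclesTransgression rels M r c.toCocycles₂ = c.transgression r :=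
  transgression_map _ (.id M) (fun g h => ofCocycles₂_toCocycles₂_apply c g h) r

theorem cocyclesTransgression_eq_zero_iff {r : FreeGroup α} (hr : r ∈ commutator (FreeGroup α))
    (f : cocycles₂ (Rep.trivial ℤ (PresentedGroup {r}) M)) :
    cocyclesTransgression {r} M r f = 0 ↔
      ⇑f ∈ coboundaries₂ (Rep.trivial ℤ (PresentedGroup {r}) M) := by
  rw [mem_coboundaries₂_iff_ofCocycles₂]
  constructor
  · intro h
    exact exists_coboundary_of_transgression_eq_zero _ fun r' hr' => by
      rwa [Set.mem_singleton_iff.1 hr']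
  · rintro ⟨φ, hφ⟩
    exact transgression_eq_zero_of_coboundary _ (Set.mem_singleton r) hr φ hφ

theorem cocyclesTransgression_surjective {r : FreeGroup α}
    (c : NormalizedCocycle (PresentedGroup rels) ℤ) (hc : c.transgression r = 1) :
    Function.Surjective (cocyclesTransgression rels ℤ r) := fun m =>
  ⟨m • c.toCocycles₂, by
    rw [map_smul, cocyclesTransgression_toCocycles₂, hc, smul_eq_mul, mul_one]⟩

end CocyclesTransgression

end NormalizedCocycle

noncomputable def groupCohomology.H2LinearEquivOfKer {k G : Type u} [CommRing k] [Group G]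
    {A : Rep k G} {N : Type*} [AddCommGroup N] [Module k N] (L : cocycles₂ A →ₗ[k] N)
    (hker : ∀ f, L f = 0 ↔ ⇑f ∈ coboundaries₂ A) (hL : Function.Surjective L) :
    H2 A ≃ₗ[k] N :=
  (LinearMap.quotKerEquivOfSurjective (H2π A).hom
      ((ModuleCat.epi_iff_surjective _).1 inferInstance)).symm ≪≫ₗ
    Submodule.quotEquivOfEq _ _ (by ext f; exact (H2π_eq_zero_iff f).trans (hker f).symm) ≪≫ₗ
    LinearMap.quotKerEquivOfSurjective L hL

theorem AddMonoidHom.map_ofMul_commutatorElement {G A : Type*} [Group G] [AddCommGroup A]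
    (φ : Additive G →+ A) (g h : G) : φ (.ofMul ⁅g, h⁆) = 0 := by
  simp only [commutatorElement_def, ofMul_mul, ofMul_inv, map_add, map_neg]
  abel

namespace PresentedGroup

variable {α : Type*} {rels : Set (FreeGroup α)}

def monoidHomEquivOfSubsetCommutator {H : Type*} [CommGroup H]
    (hrels : rels ⊆ commutator (FreeGroup α)) : (PresentedGroup rels →* H) ≃ (α → H) where
  toFun φ := φ ∘ of
  invFun v := toGroup (f := v) fun _ hr => Abelianization.commutator_subset_ker _ (hrels hr)
  left_inv _ := ext fun _ => toGroup.of _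
  right_inv _ := funext fun _ => toGroup.of _

def addMonoidHomEquivOfSubsetCommutator {M : Type*} [AddCommGroup M]
    (hrels : rels ⊆ commutator (FreeGroup α)) :
    (Additive (PresentedGroup rels) →+ M) ≃+ (α → M) where
  __ := MonoidHom.toAdditiveLeft.symm.trans <| (monoidHomEquivOfSubsetCommutator hrels).trans <|
    .piCongrRight fun _ => Multiplicative.toAdd
  map_add' _ _ := rfl

@[simp]
theorem addMonoidHomEquivOfSubsetCommutator_symm_apply_of {M : Type*} [AddCommGroup M]
    (hrels : rels ⊆ commutator (FreeGroup α)) (v : α → M) (x : α) :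
    (addMonoidHomEquivOfSubsetCommutator hrels).symm v (.ofMul (of x)) = v x :=
  congrFun ((addMonoidHomEquivOfSubsetCommutator hrels).apply_symm_apply v) x

end PresentedGroup

namespace SurfaceOr

open NormalizedCocycle

theorem rel_mem_commutator (n : ℕ) : rel n ∈ commutator (FreeGroup (Gen n)) := by
  refine Subgroup.list_prod_mem _ fun _ hx => ?_
  obtain ⟨i, rfl⟩ := List.mem_ofFn.1 hx
  exact Subgroup.commutator_mem_commutator (Subgroup.mem_top _) (Subgroup.mem_top _)

theorem transgression_cup_rel {n : ℕ} {R : Type*} [CommRing R]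
    (α β : Additive (SurfaceGroup n) →+ R) :
    (cup α β).transgression (rel n) =
      ∑ i, (α (.ofMul (a i)) * β (.ofMul (b i)) - α (.ofMul (b i)) * β (.ofMul (a i))) := by
  have hrel : (cup α β).liftOf (rel n) =
      (List.ofFn fun i => ⁅(⟨0, a i⟩ : (cup α β).Extension), ⟨0, b i⟩⁆).prod := by
    change (cup α β).liftOf (List.ofFn fun i : Fin n =>
      ⁅(FreeGroup.of (Sum.inl i) : FreeGroup (Gen n)), FreeGroup.of (Sum.inr i)⁆).prod = _
    rw [map_list_prod, List.map_ofFn]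
    simp only [Function.comp_def, map_commutatorElement, liftOf_of]
    rfl
  rw [transgression, hrel, fst_list_prod_cup, List.map_ofFn, List.sum_ofFn]
  · simp only [Function.comp_apply, fst_commutator_cup]
  · intro x hx
    obtain ⟨i, rfl⟩ := List.mem_ofFn.1 hx
    exact α.map_ofMul_commutatorElement _ _

theorem exists_transgression_eq_one {n : ℕ} (hn : 1 ≤ n) :
    ∃ c : NormalizedCocycle (SurfaceGroup n) ℤ, c.transgression (rel n) = 1 := by
  let dual (x : Gen n) : Additive (SurfaceGroup n) →+ ℤ :=
    (PresentedGroup.addMonoidHomEquivOfSubsetCommutator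
      (Set.singleton_subset_iff.2 (rel_mem_commutator n))).symm (Pi.single x 1)
  refine ⟨cup (dual (.inl ⟨0, hn⟩)) (dual (.inr ⟨0, hn⟩)), ?_⟩
  rw [transgression_cup_rel]
  simp [dual, a, b, Pi.single_apply]

/-- for the trivial `ℤG`-module `ℤ`, `H⁰(G,ℤ) ≅ ℤ`,
`H¹(G,ℤ) ≅ ℤ²ⁿ` and `H²(G,ℤ) ≅ ℤ`. -/
theorem statement13 (n : ℕ) (hn : 1 ≤ n) :
    Nonempty (groupCohomology (Rep.trivial ℤ (SurfaceGroup n) ℤ) 0 ≃+ ℤ) ∧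
    Nonempty (groupCohomology (Rep.trivial ℤ (SurfaceGroup n) ℤ) 1 ≃+ (Fin (2 * n) → ℤ)) ∧
    Nonempty (groupCohomology (Rep.trivial ℤ (SurfaceGroup n) ℤ) 2 ≃+ ℤ) := by
  have hrels := Set.singleton_subset_iff.2 (rel_mem_commutator n)
  obtain ⟨c, hc⟩ := exists_transgression_eq_one hn
  let genEquiv : Gen n ≃ Fin (2 * n) := finSumFinEquiv.trans (finCongr (two_mul n).symm)
  exact ⟨⟨(groupCohomology.H0IsoOfIsTrivial _).toLinearEquiv.toAddEquiv⟩,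
    ⟨(groupCohomology.H1IsoOfIsTrivial _).toLinearEquiv.toAddEquiv.trans <|
      (PresentedGroup.addMonoidHomEquivOfSubsetCommutator hrels).trans
        (LinearEquiv.funCongrLeft ℤ ℤ genEquiv.symm).toAddEquiv⟩,
    ⟨(groupCohomology.H2LinearEquivOfKer _
      (cocyclesTransgression_eq_zero_iff (rel_mem_commutator n))
      (cocyclesTransgression_surjective c hc)).toAddEquiv⟩⟩

end SurfaceOr
end

section
/- Let ℤ̃ denote the ℤG-module whose underlying abelian group is ℤ with G acting through the homomorphism θ: G → Aut(ℤ) = {±1} determined by θ(a_i) = 1 for all 1 ≤ i ≤ n, θ(b_i) = 1 for 1 ≤ i ≤ n−1, and θ(b_n) = −1. Then H^0(G, ℤ̃) = 0, H^1(G, ℤ̃) ≅ ℤ^{2n−2} ⊕ ℤ/2ℤ, and H^2(G, ℤ̃) ≅ ℤ/2ℤ. -/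
open scoped TensorProduct
open scoped commutatorElement

namespace SurfaceOr

/-- The values of the action `θ` on the generators: `θ(aᵢ) = 1` for all `i`,
`θ(bᵢ) = 1` for `i ≤ n-1` and `θ(bₙ) = -1`. -/
def thetaGen {n : ℕ} : Gen n → ℤˣ
  | .inl _ => 1
  | .inr i => if (i : ℕ) = n - 1 then -1 else 1

theorem thetaGen_rel (n : ℕ) :
    ∀ r ∈ ({rel n} : Set (FreeGroup (Gen n))), FreeGroup.lift (thetaGen (n := n)) r = 1 := by
  intro r hr
  rw [Set.mem_singleton_iff] at hr
  subst hr
  rw [rel, map_list_prod]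
  apply List.prod_eq_one
  intro x hx
  rw [List.map_ofFn] at hx
  rw [List.mem_ofFn] at hx
  obtain ⟨i, rfl⟩ := hx
  rw [Function.comp_apply, map_commutatorElement]
  exact commutatorElement_eq_one_iff_commute.mpr (Commute.all _ _)

/-- The nontrivial action `θ : G → Aut(ℤ) = {±1}` with `θ(aᵢ) = 1`, `θ(bᵢ) = 1` for
`i < n` and `θ(bₙ) = -1`. -/
noncomputable def theta (n : ℕ) : SurfaceGroup n →* ℤˣ :=
  PresentedGroup.toGroup (thetaGen_rel n)

/-- The `ℤG`-module `ℤ̃`: the abelian group `ℤ` with `G` acting through `θ`. -/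
noncomputable def Ztilde (n : ℕ) : Rep ℤ (SurfaceGroup n) :=
  Rep.of ((DistribMulAction.toModuleEnd ℤ ℤ).comp (theta n))

/-!
A crossed homomorphism `G → ℤ̃` is determined by its values on the generators, and these can
be prescribed freely subject to the one condition imposed by the relator; by Fox calculus that
condition is `2 f(aₙ) = 0`. The coboundaries vanish on all generators except `bₙ`, where they
take the values `2ℤ`. Hence `H¹ = ℤ^{2n-2} ⊕ ℤ/2`.

A 2-cocycle `σ` is a coboundary iff the extension `ℤ̃ → E_σ → G` splits, iff the generators
have lifts to `E_σ` under which the relator maps to `1`. Changing the lifts moves the image of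
the relator by twice the change of the lift of `aₙ`, so the image of the relator under the
zero lift, which is additive in `σ`, is the complete obstruction modulo `2`. The cup product of
the cocycle dual to `bₙ` with the homomorphism dual to `aₙ` has obstruction `-1`, so
`H² = ℤ/2`. Finally `H⁰ = 0` because `bₙ` acts by `-1`.
-/

open groupCohomology

section Cocycles

variable {k G : Type} [CommRing k] [Group G] {A : Rep k G} {M : Type} [AddCommGroup M]
  [Module k M]

lemma cocycles₁_eq_zero_of_closure (f : cocycles₁ A) {S : Set G}
    (hS : Subgroup.closure S = ⊤) (hf : ∀ g ∈ S, f g = 0) : f = 0 := by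
  have hmul := (mem_cocycles₁_iff (A := A) f).1 f.2
  have key : ∀ g ∈ Subgroup.closure S, f g = 0 := by
    intro g hg
    induction hg using Subgroup.closure_induction with
    | mem g hg => exact hf g hg
    | one => exact cocycles₁_map_one f
    | mul g h _ _ hg hh => rw [hmul, hg, hh, map_zero, add_zero]
    | inv g _ hg =>
      have h := hmul g⁻¹ g
      rwa [inv_mul_cancel, cocycles₁_map_one, hg, map_zero, zero_add, eq_comm] at h
  ext g
  exact key g (hS ▸ Subgroup.mem_top g)

lemma cocycles₁_ext_presentedGroup {X : Type} {R : Set (FreeGroup X)}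
    {A : Rep k (PresentedGroup R)} {f f' : cocycles₁ A}
    (h : ∀ x, f (PresentedGroup.of x) = f' (PresentedGroup.of x)) : f = f' :=
  sub_eq_zero.1 <| cocycles₁_eq_zero_of_closure _ (PresentedGroup.closure_range_of R) <| by
    rintro _ ⟨x, rfl⟩
    exact sub_eq_zero.2 (h x)

noncomputable def H1EquivOfSurjective (Ψ : cocycles₁ A →ₗ[k] M) (hΨ : Function.Surjective Ψ)
    (hker : ∀ f, Ψ f = 0 ↔ ⇑f ∈ coboundaries₁ A) : H1 A ≃ₗ[k] M :=
  ((H1π A).hom.quotKerEquivOfSurjective ((ModuleCat.epi_iff_surjective _).1 inferInstance)).symm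
    ≪≫ₗ Submodule.quotEquivOfEq _ _ (by
      ext f
      rw [LinearMap.mem_ker, LinearMap.mem_ker, hker]
      exact H1π_eq_zero_iff f)
    ≪≫ₗ Ψ.quotKerEquivOfSurjective hΨ

noncomputable def H2EquivOfSurjective (Ψ : cocycles₂ A →ₗ[k] M) (hΨ : Function.Surjective Ψ)
    (hker : ∀ f, Ψ f = 0 ↔ ⇑f ∈ coboundaries₂ A) : H2 A ≃ₗ[k] M :=
  ((H2π A).hom.quotKerEquivOfSurjective ((ModuleCat.epi_iff_surjective _).1 inferInstance)).symm
    ≪≫ₗ Submodule.quotEquivOfEq _ _ (by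
      ext f
      rw [LinearMap.mem_ker, LinearMap.mem_ker, hker]
      exact H2π_eq_zero_iff f)
    ≪≫ₗ Ψ.quotKerEquivOfSurjective hΨ

end Cocycles

section SignRep

variable {G H : Type} [Group G] [Group H]

abbrev signRep (θ : G →* ℤˣ) : Rep ℤ G := Rep.of ((DistribMulAction.toModuleEnd ℤ ℤ).comp θ)

variable {θ : G →* ℤˣ}

lemma signRep_ρ_apply (g : G) (x : ℤ) : (signRep θ).ρ g x = θ g * x := rfl

lemma mem_cocycles₁_signRep_iff (f : G → ℤ) :
    f ∈ cocycles₁ (signRep θ) ↔ ∀ g h, f (g * h) = θ g * f h + f g :=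
  mem_cocycles₁_iff (A := signRep θ) f

lemma cocycles₁_signRep_map_mul (f : cocycles₁ (signRep θ)) (g h : G) :
    f (g * h) = θ g * f h + f g :=
  (mem_cocycles₁_signRep_iff f).1 f.2 g h

lemma cocycles₁_signRep_map_inv (f : cocycles₁ (signRep θ)) (g : G) :
    f g⁻¹ = -(θ g * f g) := by
  have h := cocycles₁_map_inv f g
  rw [signRep_ρ_apply] at h
  linear_combination (θ g : ℤ) * h - f g⁻¹ * Int.isUnit_mul_self (θ g).isUnit

lemma cocycles₁_signRep_map_commutatorElement (f : cocycles₁ (signRep θ)) (g h : G) :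
    f ⁅g, h⁆ = (1 - θ h) * f g + (θ g - 1) * f h := by
  simp only [commutatorElement_def, cocycles₁_signRep_map_mul, cocycles₁_signRep_map_inv,
    map_mul, map_inv, Int.units_inv_eq_self, Units.val_mul]
  linear_combination -(θ h * (f g + θ h * f h)) * Int.isUnit_mul_self (θ g).isUnit -
    f h * Int.isUnit_mul_self (θ h).isUnit

lemma comp_mem_cocycles₁_signRep (f : cocycles₁ (signRep θ)) (φ : H →* G) :
    f ∘ φ ∈ cocycles₁ (signRep (θ.comp φ)) :=
  (mem_cocycles₁_signRep_iff _).2 fun g h => by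
    simp only [Function.comp_apply, map_mul, cocycles₁_signRep_map_mul, MonoidHom.comp_apply]

lemma cocycles₁_signRep_map_list_prod (f : cocycles₁ (signRep θ)) (L : List G)
    (hL : ∀ g ∈ L, θ g = 1) : f L.prod = (L.map f).sum := by
  induction L with
  | nil => exact cocycles₁_map_one f
  | cons g L ih =>
    rw [List.prod_cons, cocycles₁_signRep_map_mul, hL g List.mem_cons_self,
      ih fun h hh => hL h (List.mem_cons_of_mem g hh)]
    simp [add_comm]

lemma cocycles₁_signRep_map_prod_commutatorElement {n : ℕ} (f : cocycles₁ (signRep θ))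
    (x y : Fin n → G) (hx : ∀ i, θ (x i) = 1) :
    f (List.ofFn fun i => ⁅x i, y i⁆).prod = ∑ i, (1 - θ (y i)) * f (x i) := by
  rw [cocycles₁_signRep_map_list_prod, List.map_ofFn, List.sum_ofFn]
  · simp [cocycles₁_signRep_map_commutatorElement, hx]
  · simp [List.mem_ofFn, map_commutatorElement, commutatorElement_eq_one_iff_commute,
      Commute.all]

lemma subsingleton_H0_signRep {g : G} (hg : θ g = -1) :
    Subsingleton (H0 (signRep θ)) := by
  have : Subsingleton (signRep θ).ρ.invariants := by
    refine ⟨fun x y => Subtype.ext ?_⟩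
    have h : ∀ v : ℤ, v ∈ (signRep θ).ρ.invariants → v = 0 := fun v hv => by
      have : (θ g : ℤ) * v = v := hv g
      rw [hg, Units.val_neg, Units.val_one] at this
      omega
    rw [h x x.2, h y y.2]
  exact (H0Iso (signRep θ)).toLinearEquiv.injective.subsingleton

lemma cocycles₂_signRep_map_mul (σ : cocycles₂ (signRep θ)) (g h j : G) :
    σ (g * h, j) + σ (g, h) = θ g * σ (h, j) + σ (g, h * j) :=
  (mem_cocycles₂_iff (A := signRep θ) σ).1 σ.2 g h j

lemma cocycles₂_signRep_map_one_snd (σ : cocycles₂ (signRep θ)) (g : G) :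
    σ (g, 1) = θ g * σ (1, 1) :=
  cocycles₂_map_one_snd σ g

def cup (α : cocycles₁ (signRep θ)) (β : G →* Multiplicative ℤ) : cocycles₂ (signRep θ) :=
  ⟨fun p => α p.1 * (β p.2).toAdd, (mem_cocycles₂_iff (A := signRep θ) _).2 fun g h j => by
    rw [signRep_ρ_apply]
    simp only [cocycles₁_signRep_map_mul, map_mul, toAdd_mul]
    ring⟩

lemma cup_apply (α : cocycles₁ (signRep θ)) (β : G →* Multiplicative ℤ) (p : G × G) :
    cup α β p = α p.1 * (β p.2).toAdd := rfl

end SignRep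

section

variable {G : Type} [Group G] {θ : G →* ℤˣ}

/-- The extension of `G` by `signRep θ` with cocycle `σ`. As `σ` is not assumed normalized,
its unit is `(-σ(1, 1), 1)`. -/
@[ext]
structure Extension (σ : cocycles₂ (signRep θ)) where
  fib : ℤ
  base : G

namespace Extension

variable {σ : cocycles₂ (signRep θ)}

instance : Mul (Extension σ) :=
  ⟨fun x y => ⟨x.fib + θ x.base * y.fib + σ (x.base, y.base), x.base * y.base⟩⟩

instance : One (Extension σ) := ⟨⟨-σ (1, 1), 1⟩⟩

instance : Inv (Extension σ) :=
  ⟨fun x => ⟨-(θ x.base⁻¹ * x.fib) - σ (x.base⁻¹, x.base) - σ (1, 1), x.base⁻¹⟩⟩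

@[simp] lemma mul_fib (x y : Extension σ) :
    (x * y).fib = x.fib + θ x.base * y.fib + σ (x.base, y.base) := rfl

@[simp] lemma mul_base (x y : Extension σ) : (x * y).base = x.base * y.base := rfl

@[simp] lemma one_fib : (1 : Extension σ).fib = -σ (1, 1) := rfl

@[simp] lemma one_base : (1 : Extension σ).base = 1 := rfl

@[simp] lemma inv_fib (x : Extension σ) :
    x⁻¹.fib = -(θ x.base⁻¹ * x.fib) - σ (x.base⁻¹, x.base) - σ (1, 1) := rfl

@[simp] lemma inv_base (x : Extension σ) : x⁻¹.base = x.base⁻¹ := rfl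

instance : Group (Extension σ) where
  mul_assoc x y z := by
    ext
    · have := cocycles₂_signRep_map_mul σ x.base y.base z.base
      simp only [mul_fib, mul_base, map_mul, Units.val_mul]
      linear_combination this
    · exact mul_assoc _ _ _
  one_mul x := by
    ext
    · simp [cocycles₂_map_one_fst]
    · exact one_mul _
  mul_one x := by
    ext
    · simp only [mul_fib, one_fib, one_base]
      rw [cocycles₂_signRep_map_one_snd σ x.base]
      ring
    · exact mul_one _
  inv_mul_cancel x := by
    ext
    · simp only [mul_fib, inv_fib, inv_base, one_fib]
      ring
    · exact inv_mul_cancel _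

variable (σ) in
def proj : Extension σ →* G where
  toFun := base
  map_one' := rfl
  map_mul' _ _ := rfl

lemma base_commutatorElement (x y : Extension σ) : ⁅x, y⁆.base = ⁅x.base, y.base⁆ :=
  map_commutatorElement (proj σ) x y

lemma fib_list_prod (L : List (Extension σ))
    (hL : ∀ x ∈ L, θ x.base = 1 ∧ ∀ h, σ (x.base, h) = 0) :
    L.prod.fib = (L.map fib).sum - σ (1, 1) := by
  induction L with
  | nil => simp
  | cons x L ih =>
    obtain ⟨hθ, hσ⟩ := hL x List.mem_cons_self
    rw [List.prod_cons, mul_fib, hθ, hσ, ih fun y hy => hL y (List.mem_cons_of_mem x hy)]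
    simp only [List.map_cons, List.sum_cons, Units.val_one]
    ring

lemma fib_commutatorElement_cup {α : cocycles₁ (signRep θ)} {β : G →* Multiplicative ℤ}
    {g h : G} (hθ : θ g = 1) (hα : α g = 0) (hβ : (β h).toAdd = 0) :
    ⁅Extension.mk (σ := cup α β) 0 g, Extension.mk (σ := cup α β) 0 h⁆.fib =
      -(α h * (β g).toAdd) := by
  simp [commutatorElement_def, cup_apply, cocycles₁_signRep_map_mul, cocycles₁_signRep_map_inv,
    hθ, hα, hβ]

end Extension

end

section Presentation

open Extension

variable {X : Type} {R : Set (FreeGroup X)} {θ : PresentedGroup R →* ℤˣ}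

def liftGen (σ : cocycles₂ (signRep θ)) (e : X → ℤ) : FreeGroup X →* Extension σ :=
  FreeGroup.lift fun x => ⟨e x, PresentedGroup.of x⟩

variable {σ : cocycles₂ (signRep θ)}

@[simp] lemma liftGen_of (e : X → ℤ) (x : X) :
    liftGen σ e (FreeGroup.of x) = ⟨e x, PresentedGroup.of x⟩ :=
  FreeGroup.lift_apply_of

@[simp] lemma base_liftGen (e : X → ℤ) (w : FreeGroup X) :
    (liftGen σ e w).base = PresentedGroup.mk R w :=
  DFunLike.congr_fun (FreeGroup.ext_hom ((proj σ).comp (liftGen σ e)) (PresentedGroup.mk R)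
    fun x => congrArg base (liftGen_of (σ := σ) e x)) w

lemma exists_section_of_liftGen {e : X → ℤ} (h : ∀ r ∈ R, liftGen σ e r = 1) :
    ∃ s : PresentedGroup R →* Extension σ,
      (∀ g, (s g).base = g) ∧ ∀ x, (s (PresentedGroup.of x)).fib = e x := by
  let s := PresentedGroup.toGroup (f := fun x => (⟨e x, .of x⟩ : Extension σ)) h
  have hs : ∀ x, s (PresentedGroup.of x) = ⟨e x, .of x⟩ := fun x => PresentedGroup.toGroup.of h
  refine ⟨s, fun g => ?_, fun x => by rw [hs]⟩
  change (proj σ).comp s g = MonoidHom.id _ g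
  congr 1
  exact PresentedGroup.ext fun x => by simp [proj, hs]

/-- Both sides say that the extension of `σ` splits. -/
lemma mem_coboundaries₂_iff_exists_liftGen :
    ⇑σ ∈ coboundaries₂ (signRep θ) ↔ ∃ e : X → ℤ, ∀ r ∈ R, liftGen σ e r = 1 := by
  constructor
  · rintro ⟨τ, hτ⟩
    have hσ : ∀ g h, σ (g, h) = θ g * τ h - τ (g * h) + τ g := fun g h =>
      (congrFun hτ (g, h)).symm
    let χ : PresentedGroup R →* Extension σ := MonoidHom.mk' (fun g => ⟨-τ g, g⟩) fun g h => by
      ext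
      · simp only [mul_fib, hσ]
        ring
      · rfl
    refine ⟨fun x => -τ (PresentedGroup.of x), fun r hr => ?_⟩
    have : liftGen σ (fun x => -τ (PresentedGroup.of x)) = χ.comp (PresentedGroup.mk R) :=
      FreeGroup.ext_hom _ _ fun x => liftGen_of _ x
    rw [this, MonoidHom.comp_apply, PresentedGroup.one_of_mem hr, map_one]
  · rintro ⟨e, he⟩
    obtain ⟨s, hs, -⟩ := exists_section_of_liftGen he
    refine ⟨fun g => -(s g).fib, funext fun p => ?_⟩
    have h := congrArg fib (map_mul s p.1 p.2)
    simp only [mul_fib, hs] at h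
    change θ p.1 * -(s p.2).fib - -(s (p.1 * p.2)).fib + -(s p.1).fib = σ p
    rw [h]
    ring

lemma sub_fib_liftGen_mem_cocycles₁ (σ : cocycles₂ (signRep θ)) (e e' : X → ℤ) :
    (fun w => (liftGen σ e w).fib - (liftGen σ e' w).fib) ∈
      cocycles₁ (signRep (θ.comp (PresentedGroup.mk R))) :=
  (mem_cocycles₁_signRep_iff _).2 fun w w' => by
    simp only [map_mul, mul_fib, base_liftGen, MonoidHom.comp_apply]
    ring

lemma fib_liftGen_add (σ σ' : cocycles₂ (signRep θ)) (w : FreeGroup X) :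
    (liftGen (σ + σ') 0 w).fib = (liftGen σ 0 w).fib + (liftGen σ' 0 w).fib := by
  let F : cocycles₁ (signRep (θ.comp (PresentedGroup.mk R))) :=
    ⟨fun w => (liftGen (σ + σ') 0 w).fib - (liftGen σ 0 w).fib - (liftGen σ' 0 w).fib,
      (mem_cocycles₁_signRep_iff _).2 fun w w' => by
        simp only [map_mul, mul_fib, base_liftGen, MonoidHom.comp_apply]
        change _ + _ + (σ _ + σ' _) - _ - _ = _
        ring⟩
  have hF : F = 0 := cocycles₁_eq_zero_of_closure F (FreeGroup.closure_range_of X) <| by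
    rintro _ ⟨x, rfl⟩
    change (liftGen _ 0 _).fib - (liftGen _ 0 _).fib - (liftGen _ 0 _).fib = 0
    simp
  have : F w = 0 := by rw [hF]; rfl
  change (liftGen (σ + σ') 0 w).fib - (liftGen σ 0 w).fib - (liftGen σ' 0 w).fib = 0 at this
  linarith

lemma liftGen_eq_one_iff {σ : cocycles₂ (signRep θ)} {r : FreeGroup X} (hr : r ∈ R)
    (e : X → ℤ) : liftGen σ e r = 1 ↔ (liftGen σ e r).fib + σ (1, 1) = 0 := by
  rw [Extension.ext_iff, one_fib, one_base, base_liftGen, PresentedGroup.one_of_mem hr,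
    and_iff_left rfl, ← sub_eq_zero, sub_neg_eq_add]

variable (θ) in
/-- The summand `σ (1, 1)` makes it vanish exactly when the zero lift kills `r`, the unit of the
extension being `(-σ(1, 1), 1)`. -/
def obstruction (r : FreeGroup X) : cocycles₂ (signRep θ) →+ ℤ :=
  AddMonoidHom.mk' (fun σ => (liftGen σ 0 r).fib + σ (1, 1)) fun σ σ' => by
    simp only [fib_liftGen_add]
    change _ + (σ (1, 1) + σ' (1, 1)) = _
    ring

lemma obstruction_apply (r : FreeGroup X) (σ : cocycles₂ (signRep θ)) :
    obstruction θ r σ = (liftGen σ 0 r).fib + σ (1, 1) := rfl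

lemma exists_cocycles₁_of_liftGen {e : X → ℤ}
    (h : ∀ r ∈ R, liftGen (0 : cocycles₂ (signRep θ)) e r = 1) :
    ∃ f : cocycles₁ (signRep θ), ∀ x, f (PresentedGroup.of x) = e x := by
  obtain ⟨s, hs, hse⟩ := exists_section_of_liftGen h
  refine ⟨⟨fun g => (s g).fib, (mem_cocycles₁_signRep_iff _).2 fun g h => ?_⟩, hse⟩
  have := congrArg fib (map_mul s g h)
  simp only [mul_fib, hs] at this
  rw [this]
  change _ + _ + 0 = _
  ring

end Presentation

section Surface

variable {m : ℕ}

lemma theta_of {n : ℕ} (x : Gen n) : theta n (PresentedGroup.of x) = thetaGen x :=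
  PresentedGroup.toGroup.of _

@[simp] lemma theta_mk_of {n : ℕ} (x : Gen n) :
    theta n (PresentedGroup.mk _ (FreeGroup.of x)) = thetaGen x :=
  theta_of x

@[simp] lemma thetaGen_inl (i : Fin (m + 1)) : thetaGen (Sum.inl i) = 1 := rfl

@[simp] lemma thetaGen_inr_last : thetaGen (Sum.inr (Fin.last m)) = -1 := by
  simp [thetaGen]

@[simp] lemma thetaGen_inr_castSucc (i : Fin m) : thetaGen (Sum.inr i.castSucc) = 1 := by
  simp [thetaGen, i.isLt.ne]

lemma lift_eq_one_of_mem_rel {n : ℕ} {H : Type} [CommGroup H] (f : Gen n → H) :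
    ∀ r ∈ ({rel n} : Set (FreeGroup (Gen n))), FreeGroup.lift f r = 1 := by
  rintro r rfl
  rw [rel, map_list_prod]
  apply List.prod_eq_one
  simp [List.mem_ofFn, map_commutatorElement, commutatorElement_eq_one_iff_commute, Commute.all]

/-- Fox calculus: only `∂/∂aₙ` of the relator survives `θ`, with coefficient `1 - θ(bₙ) = 2`. -/
lemma cocycles₁_map_rel
    (f : cocycles₁ (signRep ((theta (m + 1)).comp (PresentedGroup.mk {rel (m + 1)})))) :
    f (rel (m + 1)) = 2 * f (FreeGroup.of (Sum.inl (Fin.last m))) := by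
  refine (cocycles₁_signRep_map_prod_commutatorElement f (fun i => .of (.inl i))
    (fun i => .of (.inr i)) fun i => theta_of _).trans ?_
  simp [Fin.sum_univ_castSucc]

open Extension in
lemma fib_liftGen_rel (σ : cocycles₂ (signRep (theta (m + 1)))) (e : Gen (m + 1) → ℤ) :
    (liftGen σ e (rel (m + 1))).fib =
      (liftGen σ 0 (rel (m + 1))).fib + 2 * e (.inl (Fin.last m)) := by
  have := cocycles₁_map_rel ⟨_, sub_fib_liftGen_mem_cocycles₁ σ e 0⟩
  change (liftGen σ e (rel (m + 1))).fib - (liftGen σ 0 (rel (m + 1))).fib =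
    2 * ((liftGen σ e (.of _)).fib - (liftGen σ 0 (.of _)).fib) at this
  simp only [liftGen_of, Pi.zero_apply, sub_zero] at this
  linarith

lemma liftGen_rel_eq_one_iff (σ : cocycles₂ (signRep (theta (m + 1)))) (e : Gen (m + 1) → ℤ) :
    liftGen σ e (rel (m + 1)) = 1 ↔
      obstruction (theta (m + 1)) (rel (m + 1)) σ + 2 * e (.inl (Fin.last m)) = 0 := by
  rw [liftGen_eq_one_iff (Set.mem_singleton _), fib_liftGen_rel, obstruction_apply,
    add_right_comm]

lemma mem_coboundaries₂_iff_two_dvd_obstruction (σ : cocycles₂ (signRep (theta (m + 1)))) :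
    ⇑σ ∈ coboundaries₂ (signRep (theta (m + 1))) ↔
      2 ∣ obstruction (theta (m + 1)) (rel (m + 1)) σ := by
  simp only [mem_coboundaries₂_iff_exists_liftGen, Set.mem_singleton_iff, forall_eq,
    liftGen_rel_eq_one_iff]
  constructor
  · rintro ⟨e, he⟩
    exact ⟨-e (.inl (Fin.last m)), by linarith⟩
  · rintro ⟨t, ht⟩
    exact ⟨fun _ => -t, by rw [ht]; ring⟩

lemma exists_cocycles₁_of_gen {e : Gen (m + 1) → ℤ} (he : e (.inl (Fin.last m)) = 0) :
    ∃ f : cocycles₁ (signRep (theta (m + 1))), ∀ x, f (PresentedGroup.of x) = e x :=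
  exists_cocycles₁_of_liftGen <| by simp [liftGen_rel_eq_one_iff, he]

lemma cocycles₁_map_a_last (f : cocycles₁ (signRep (theta (m + 1)))) :
    f (a (Fin.last m)) = 0 := by
  have := cocycles₁_map_rel ⟨_, comp_mem_cocycles₁_signRep f (PresentedGroup.mk _)⟩
  change f (PresentedGroup.mk _ (rel (m + 1))) = 2 * f (a (Fin.last m)) at this
  rw [PresentedGroup.one_of_mem (Set.mem_singleton _), cocycles₁_map_one] at this
  linarith

end Surface

section FirstCohomology

variable {m : ℕ}

/-- The generators other than `aₙ` and `bₙ`. -/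
def castGen : Fin m ⊕ Fin m → Gen (m + 1) := Sum.map Fin.castSucc Fin.castSucc

@[simp] lemma thetaGen_castGen (s : Fin m ⊕ Fin m) : thetaGen (castGen s) = 1 := by
  rcases s with i | i <;> simp [castGen]

lemma forall_gen_iff {P : Gen (m + 1) → Prop} :
    (∀ x, P x) ↔ P (.inl (Fin.last m)) ∧ P (.inr (Fin.last m)) ∧ ∀ s, P (castGen s) := by
  refine ⟨fun h => ⟨h _, h _, fun _ => h _⟩, fun ⟨ha, hb, hs⟩ x => ?_⟩
  rcases x with i | i <;> induction i using Fin.lastCases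
  exacts [ha, hs (.inl _), hb, hs (.inr _)]

variable (m) in
noncomputable def H1Coordinates :
    cocycles₁ (signRep (theta (m + 1))) →ₗ[ℤ] (Fin m ⊕ Fin m → ℤ) × ZMod 2 :=
  (LinearMap.pi fun s => (LinearMap.proj (PresentedGroup.of (castGen s))).comp
      (cocycles₁ _).subtype).prod
    ((Int.castAddHom (ZMod 2)).toIntLinearMap ∘ₗ
      (LinearMap.proj (b (Fin.last m))).comp (cocycles₁ _).subtype)

lemma H1Coordinates_apply (f : cocycles₁ (signRep (theta (m + 1)))) :
    H1Coordinates m f = (fun s => f (.of (castGen s)), (f (b (Fin.last m)) : ZMod 2)) := rfl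

lemma H1Coordinates_eq_zero_iff (f : cocycles₁ (signRep (theta (m + 1)))) :
    H1Coordinates m f = 0 ↔ ⇑f ∈ coboundaries₁ (signRep (theta (m + 1))) := by
  rw [H1Coordinates_apply, Prod.mk_eq_zero, funext_iff, ZMod.intCast_zmod_eq_zero_iff_dvd]
  constructor
  · rintro ⟨hs, t, ht⟩
    let d : cocycles₁ (signRep (theta (m + 1))) := ⟨_, d₀₁_apply_mem_cocycles₁ (-t)⟩
    have hd : ∀ x, d (.of x) = -(thetaGen x * t) + t := fun x => by
      change (theta (m + 1) (.of x) : ℤ) * -t - -t = _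
      rw [theta_of]
      ring
    refine ⟨-t, congrArg DFunLike.coe (cocycles₁_ext_presentedGroup (f := d) ?_)⟩
    refine forall_gen_iff.2 ⟨?_, ?_, fun s => ?_⟩
    · have ha : f (.of (.inl (Fin.last m))) = 0 := cocycles₁_map_a_last f
      simp [hd, ha]
    · have hb : f (.of (.inr (Fin.last m))) = 2 * t := ht
      rw [hd, hb, thetaGen_inr_last, Units.val_neg, Units.val_one]
      ring
    · simp [hd, hs s]
  · rintro ⟨x, hx⟩
    have hf : ∀ g, f g = theta (m + 1) g * x - x := fun g => (congrFun hx g).symm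
    refine ⟨fun s => by simp [hf, theta_of], -x, ?_⟩
    rw [hf, b, theta_of, thetaGen_inr_last, Units.val_neg, Units.val_one]
    ring

lemma H1Coordinates_surjective : Function.Surjective (H1Coordinates m) := by
  rintro ⟨v, z⟩
  let e : Gen (m + 1) → ℤ :=
    Sum.elim (Fin.snoc (α := fun _ => ℤ) (v ∘ .inl) 0)
      (Fin.snoc (α := fun _ => ℤ) (v ∘ .inr) z.val)
  obtain ⟨f, hf⟩ := exists_cocycles₁_of_gen (e := e) (by simp [e])
  refine ⟨f, ?_⟩
  rw [H1Coordinates_apply, b, hf]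
  congr 1
  · ext (i | i) <;> simp [hf, e, castGen]
  · simp [e]

variable (m) in
noncomputable def H1Equiv : H1 (signRep (theta (m + 1))) ≃ₗ[ℤ] (Fin m ⊕ Fin m → ℤ) × ZMod 2 :=
  H1EquivOfSurjective (H1Coordinates m) H1Coordinates_surjective H1Coordinates_eq_zero_iff

end FirstCohomology

section SecondCohomology

variable {m : ℕ}

variable (m) in
noncomputable def dualA : SurfaceGroup (m + 1) →* Multiplicative ℤ :=
  PresentedGroup.toGroup (lift_eq_one_of_mem_rel fun x =>
    .ofAdd ((Pi.single (.inl (Fin.last m)) 1 : Gen (m + 1) → ℤ) x))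

lemma toAdd_dualA_of (x : Gen (m + 1)) :
    (dualA m (.of x)).toAdd = (Pi.single (.inl (Fin.last m)) 1 : Gen (m + 1) → ℤ) x := by
  simp [dualA, PresentedGroup.toGroup.of]

lemma liftGen_rel (σ : cocycles₂ (signRep (theta (m + 1)))) :
    liftGen σ 0 (rel (m + 1)) =
      (List.ofFn fun i => ⁅Extension.mk (σ := σ) 0 (a i), Extension.mk (σ := σ) 0 (b i)⁆).prod := by
  change liftGen σ 0 (List.ofFn fun i =>
    ⁅(FreeGroup.of (.inl i) : FreeGroup (Gen (m + 1))), .of (.inr i)⁆).prod = _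
  simp only [map_list_prod, List.map_ofFn, Function.comp_def, map_commutatorElement,
    liftGen_of, Pi.zero_apply]
  rfl

open Extension in
lemma exists_obstruction_eq_neg_one :
    ∃ σ : cocycles₂ (signRep (theta (m + 1))),
      obstruction (theta (m + 1)) (rel (m + 1)) σ = -1 := by
  obtain ⟨α, hα⟩ := exists_cocycles₁_of_gen (e := Pi.single (.inr (Fin.last m)) 1) (by simp)
  have hαa : ∀ i, α (a i) = 0 := fun i => by simp [a, hα]
  have hθa : ∀ i, theta (m + 1) (a i) = 1 := fun i => theta_of _
  have hβb : ∀ i, (dualA m (b i)).toAdd = 0 := fun i => by simp [b, toAdd_dualA_of]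
  refine ⟨cup α (dualA m), ?_⟩
  rw [obstruction_apply, liftGen_rel, fib_list_prod, cup_apply, cocycles₁_map_one, zero_mul,
    List.map_ofFn, List.sum_ofFn]
  · simp only [Function.comp_apply, fib_commutatorElement_cup (hθa _) (hαa _) (hβb _)]
    simp [a, b, hα, toAdd_dualA_of, Fin.sum_univ_castSucc]
  · simp [List.mem_ofFn, base_commutatorElement, cup_apply,
      cocycles₁_signRep_map_commutatorElement, map_commutatorElement, hθa, hαa]

variable (m) in
noncomputable def H2Coordinate : cocycles₂ (signRep (theta (m + 1))) →ₗ[ℤ] ZMod 2 :=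
  ((Int.castAddHom (ZMod 2)).comp (obstruction (theta (m + 1)) (rel (m + 1)))).toIntLinearMap

lemma H2Coordinate_eq_zero_iff (σ : cocycles₂ (signRep (theta (m + 1)))) :
    H2Coordinate m σ = 0 ↔ ⇑σ ∈ coboundaries₂ (signRep (theta (m + 1))) := by
  rw [mem_coboundaries₂_iff_two_dvd_obstruction]
  exact ZMod.intCast_zmod_eq_zero_iff_dvd _ 2

lemma H2Coordinate_surjective : Function.Surjective (H2Coordinate m) := by
  obtain ⟨σ, hσ⟩ := exists_obstruction_eq_neg_one (m := m)
  intro z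
  obtain ⟨k, rfl⟩ := ZMod.intCast_surjective z
  exact ⟨-k • σ, by simp [H2Coordinate, hσ]⟩

variable (m) in
noncomputable def H2Equiv : H2 (signRep (theta (m + 1))) ≃ₗ[ℤ] ZMod 2 :=
  H2EquivOfSurjective (H2Coordinate m) H2Coordinate_surjective H2Coordinate_eq_zero_iff

end SecondCohomology

/-- `H⁰(G,ℤ̃) = 0`, `H¹(G,ℤ̃) ≅ ℤ^{2n-2} ⊕ ℤ/2` and
`H²(G,ℤ̃) ≅ ℤ/2`. -/
theorem statement14 (n : ℕ) (hn : 1 ≤ n) :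
    Subsingleton (groupCohomology (Ztilde n) 0) ∧
    Nonempty (groupCohomology (Ztilde n) 1 ≃+ (Fin (2 * n - 2) → ℤ) × ZMod 2) ∧
    Nonempty (groupCohomology (Ztilde n) 2 ≃+ ZMod 2) := by
  obtain ⟨m, rfl⟩ := Nat.exists_eq_add_of_le' hn
  refine ⟨subsingleton_H0_signRep (g := b (Fin.last m)) ?_, ⟨?_⟩, ⟨(H2Equiv m).toAddEquiv⟩⟩
  · rw [b, theta_of, thetaGen_inr_last]
  · rw [show 2 * (m + 1) - 2 = m + m by omega]
    exact ((H1Equiv m).trans ((LinearEquiv.funCongrLeft ℤ ℤ finSumFinEquiv).symm.prodCongr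
      (LinearEquiv.refl ℤ _))).toAddEquiv

end SurfaceOr
end
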